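/- arXiv:1206.3715 — 11 statements merged into one kernel-verified Lean document; each statement's English description precedes it below -/
import Mathlib

section
/- If x is an integer and y, l are integers with y > 0 and l > 1 satisfying x^2 − 125 = −4·y^l, then either y = 1 and x = ±11, or (x, y, l) = (±5, 5, 2). -/
/-!
Put `n = y ^ l`. Then `x ^ 2 + 4 n = 125` forces `|x| ≤ 11` with `x` odd, so `n` is one of
`1, 11, 19, 25, 29, 31`. Apart from `1` and `25 = 5 ^ 2` these are primes, which are not perfect
powers; and `y ^ l = 5 ^ 2` with `l > 1` only for `y = 5`, `l = 2`.
-/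

lemma sq_add_four_mul_eq_125_cases {x : ℤ} {n : ℕ} (h : x ^ 2 + 4 * n = 125) :
    (x = 11 ∨ x = -11) ∧ n = 1 ∨ (x = 5 ∨ x = -5) ∧ n = 25 ∨ n.Prime := by
  have hx : x ^ 2 < 12 ^ 2 := by linarith [Int.natCast_nonneg n]
  obtain ⟨hxl, hxu⟩ := abs_lt_of_sq_lt_sq' hx (by norm_num)
  obtain rfl : n = ((125 - x ^ 2) / 4).toNat := by omega
  interval_cases x <;> revert h <;> decide

lemma Nat.eq_and_eq_two_of_pow_eq_prime_sq {p m l : ℕ} (hp : p.Prime) (hl : 1 < l)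
    (h : m ^ l = p ^ 2) : m = p ∧ l = 2 := by
  obtain ⟨k, hk, rfl⟩ := (Nat.dvd_prime_pow hp).1 (h ▸ dvd_pow_self m (by omega))
  have hkl : k * l = 2 := Nat.pow_right_injective hp.two_le (by simpa [← pow_mul] using h)
  obtain rfl : k = 1 := by
    interval_cases k <;> omega
  exact ⟨pow_one p, by omega⟩

/-- If `x^2 - 125 = -4·y^l` with `y > 0` and `l > 1`, then either `y = 1` and
`x = ±11`, or `(x, y, l) = (±5, 5, 2)`. -/
theorem x_sq_sub_125_eq_neg_four_pow (x y : ℤ) (l : ℕ)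
    (hy : 0 < y) (hl : 1 < l)
    (heq : x ^ 2 - 125 = -4 * y ^ l) :
    (y = 1 ∧ (x = 11 ∨ x = -11)) ∨
    ((x = 5 ∨ x = -5) ∧ y = 5 ∧ l = 2) := by
  lift y to ℕ using hy.le
  have h : x ^ 2 + 4 * (y ^ l : ℕ) = 125 := by push_cast; linarith
  rcases sq_add_four_mul_eq_125_cases h with ⟨hx, hn⟩ | ⟨hx, hn⟩ | hn
  · exact Or.inl ⟨by simpa using (Nat.pow_eq_one.1 hn).resolve_right (by omega), hx⟩
  · obtain ⟨rfl, rfl⟩ := Nat.eq_and_eq_two_of_pow_eq_prime_sq Nat.prime_five hl hn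
    exact Or.inr ⟨hx, rfl, rfl⟩
  · exact absurd hn.eq_one_of_pow (by omega)
end

section
/- If x is an integer and y, l are integers with y > 0, l > 1, l even, satisfying x^2 − 125 = 4·y^l, then l = 2 and (x, y) ∈ {(±15, 5), (±63, 31)}. -/
/-!
Writing `l = 2k`, the equation becomes `(x - 2y^k)(x + 2y^k) = 125`, so `x - 2y^k` is a signed power
of `5`; running through the divisors of `125` leaves `y^k = 5` or `y^k = 31`. As both are prime,
`y` is that prime and `k = 1`.
-/

lemma sq_sub_four_mul_sq_eq_125 {x w : ℤ} (hw : 0 < w) (h : x ^ 2 - 4 * w ^ 2 = 125) :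
    (w = 5 ∧ (x = 15 ∨ x = -15)) ∨ (w = 31 ∧ (x = 63 ∨ x = -63)) := by
  have hfac : (x - 2 * w) * (x + 2 * w) = 125 := by linear_combination h
  have hdvd : (x - 2 * w).natAbs ∣ 5 ^ 3 := by
    simpa using Int.natAbs_dvd_natAbs.mpr (Dvd.intro _ hfac)
  obtain ⟨i, hi, hd⟩ := (Nat.dvd_prime_pow Nat.prime_five).1 hdvd
  interval_cases i <;> rcases Int.natAbs_eq_iff.mp hd with hd | hd <;>
    rw [hd] at hfac <;> push_cast at hfac <;> omega

theorem x_sq_sub_125_eq_four_pow_even_general (x y : ℤ) (l : ℕ)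
    (hy : 0 < y) (hleven : Even l)
    (heq : x ^ 2 - 125 = 4 * y ^ l) :
    l = 2 ∧ (((x = 15 ∨ x = -15) ∧ y = 5) ∨ ((x = 63 ∨ x = -63) ∧ y = 31)) := by
  obtain ⟨k, rfl⟩ := hleven
  lift y to ℕ using hy.le
  have hsq : x ^ 2 - 4 * ((y : ℤ) ^ k) ^ 2 = 125 := by linear_combination heq
  have hprime {p : ℕ} (hp : p.Prime) (hyk : ((y : ℤ) ^ k) = p) : y = p ∧ k = 1 :=
    hp.pow_eq_iff.1 (by exact_mod_cast hyk)
  rcases sq_sub_four_mul_sq_eq_125 (by positivity) hsq with ⟨hyk, hx⟩ | ⟨hyk, hx⟩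
  · obtain ⟨rfl, rfl⟩ := hprime (p := 5) (by norm_num) hyk
    exact ⟨rfl, .inl ⟨hx, rfl⟩⟩
  · obtain ⟨rfl, rfl⟩ := hprime (p := 31) (by norm_num) hyk
    exact ⟨rfl, .inr ⟨hx, rfl⟩⟩

/-- If `x^2 - 125 = 4·y^l` with `y > 0`, `l > 1` and `l` even, then `l = 2` and
`(x, y) ∈ {(±15, 5), (±63, 31)}`. -/
theorem x_sq_sub_125_eq_four_pow_even (x y : ℤ) (l : ℕ)
    (hy : 0 < y) (hl : 1 < l) (hleven : Even l)
    (heq : x ^ 2 - 125 = 4 * y ^ l) :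
    l = 2 ∧ (((x = 15 ∨ x = -15) ∧ y = 5) ∨ ((x = 63 ∨ x = -63) ∧ y = 31)) :=
  x_sq_sub_125_eq_four_pow_even_general x y l hy hleven heq
end

section
/- Let s be an integer whose absolute value is a prime power, let y be a positive integer that is either 1 or a prime power, and let l > 1 be an integer such that s^2 − 11s − 1 = ±y^l. Then either (s, y, l) is one of (13, 5, 2), (−2, 5, 2), (37, 31, 2), (11, 1, l), (8, 5, 2), (3, 5, 2), (−7, 5, 3), or l is odd and s^2 − 11s − 1 = y^l (with the plus sign). -/
/-!
If `s² - 11s - 1 = -yˡ`, then `s(11 - s) + 1 = yˡ ≥ 0` forces `0 ≤ s ≤ 11`, and the values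
`1, 19, 25, 29, 31` that occur for prime-power `|s|` are perfect `l`-th powers only as `1 = 1ˡ` and
`25 = 5²`. If `s² - 11s - 1 = t²` with `t = y^(l/2)` (`l` even), then
`(2s - 11 - 2t)(2s - 11 + 2t) = 125`, whose finitely many factorisations give
`s ∈ {37, -26, 13, -2}`; `26` is not a prime power, and `t ∈ {31, 5}` is prime, so `l = 2`.
The remaining case, `l` odd with the plus sign, is the last alternative of the conclusion.
-/

theorem Nat.Prime.exists_eq_pow_of_pow_eq_pow {p a l k : ℕ} (hp : p.Prime) (hl : l ≠ 0)
    (h : a ^ l = p ^ k) : ∃ i, a = p ^ i ∧ i * l = k := by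
  obtain ⟨i, -, rfl⟩ := (Nat.dvd_prime_pow hp).1 (h ▸ dvd_pow_self a hl)
  exact ⟨i, rfl, Nat.pow_right_injective hp.two_le (by simpa [← pow_mul] using h)⟩

theorem Nat.Prime.eq_and_eq_two_of_pow_eq_sq {p a l : ℕ} (hp : p.Prime) (hl : 1 < l)
    (h : a ^ l = p ^ 2) : a = p ∧ l = 2 := by
  obtain ⟨i, rfl, hil⟩ := hp.exists_eq_pow_of_pow_eq_pow (by omega) h
  have hl2 : l ≤ 2 := Nat.le_of_dvd two_pos ⟨i, by rw [← hil, mul_comm]⟩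
  obtain rfl : l = 2 := by omega
  obtain rfl : i = 1 := by omega
  simp

theorem eq_of_sq_eq_sq_sub_eleven_mul_sub_one {s t : ℤ} (ht : 0 ≤ t)
    (h : t ^ 2 = s ^ 2 - 11 * s - 1) :
    ((s = 37 ∨ s = -26) ∧ t = 31) ∨ ((s = 13 ∨ s = -2) ∧ t = 5) := by
  obtain ⟨a, ha⟩ : ∃ a, a = 2 * s - 11 - 2 * t := ⟨_, rfl⟩
  obtain ⟨b, hb⟩ : ∃ b, b = 2 * s - 11 + 2 * t := ⟨_, rfl⟩
  have hab : a * b = 125 := by subst ha hb; linear_combination (-4) * h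
  have hb_mem : b.natAbs ∈ Nat.divisors 125 :=
    Nat.mem_divisors.2 ⟨by simpa using Int.natAbs_dvd_natAbs.2 (Dvd.intro_left a hab), by norm_num⟩
  rw [show Nat.divisors 125 = {1, 5, 25, 125} by decide] at hb_mem
  simp only [Finset.mem_insert, Finset.mem_singleton] at hb_mem
  rcases hb_mem with hb' | hb' | hb' | hb' <;>
    rcases Int.natAbs_eq_iff.1 hb' with rfl | rfl <;> omega

theorem eq_of_sq_sub_eleven_mul_sub_one_eq_pow_even {s : ℤ} {y m : ℕ}
    (hs : IsPrimePow s.natAbs) (hm : m ≠ 0) (h : s ^ 2 - 11 * s - 1 = (y : ℤ) ^ (m + m)) :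
    (s = 13 ∨ s = -2) ∧ y = 5 ∧ m = 1 ∨ s = 37 ∧ y = 31 ∧ m = 1 := by
  have hsq : ((y : ℤ) ^ m) ^ 2 = s ^ 2 - 11 * s - 1 := by rw [h]; ring
  rcases eq_of_sq_eq_sq_sub_eleven_mul_sub_one (by positivity) hsq with ⟨hs', ht⟩ | ⟨hs', ht⟩
  · obtain ⟨rfl, rfl⟩ := (by norm_num : Nat.Prime 31).pow_eq_iff.1 (by exact_mod_cast ht)
    rcases hs' with rfl | rfl
    · simp
    · exact absurd hs (by decide)
  · obtain ⟨rfl, rfl⟩ := Nat.prime_five.pow_eq_iff.1 (by exact_mod_cast ht)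
    simpa using hs'

theorem eq_of_sq_sub_eleven_mul_sub_one_eq_neg_pow {s : ℤ} {y l : ℕ}
    (hs : IsPrimePow s.natAbs) (hl : 1 < l) (h : s ^ 2 - 11 * s - 1 = -(y : ℤ) ^ l) :
    (s = 3 ∨ s = 8) ∧ y = 5 ∧ l = 2 ∨ s = 11 ∧ y = 1 := by
  have hval : ((y ^ l : ℕ) : ℤ) = 1 + s * (11 - s) := by push_cast; linarith
  have hs0 : 0 ≤ s := by nlinarith [Int.natCast_nonneg (y ^ l)]
  have hs11 : s ≤ 11 := by nlinarith [Int.natCast_nonneg (y ^ l)]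
  have pow_ne_prime {p : ℕ} (hp : p.Prime) : y ^ l ≠ p := fun hyp => by
    have := (hp.pow_eq_iff.1 hyp).2; omega
  interval_cases s <;> try exact absurd hs (by decide)
  all_goals norm_num at hval ⊢; norm_cast at hval
  · exact pow_ne_prime (by norm_num) hval
  · exact Nat.prime_five.eq_and_eq_two_of_pow_eq_sq hl hval
  · exact pow_ne_prime (by norm_num) hval
  · exact pow_ne_prime (by norm_num) hval
  · exact pow_ne_prime (by norm_num) hval
  · exact Nat.prime_five.eq_and_eq_two_of_pow_eq_sq hl hval
  · exact pow_ne_prime (by norm_num) hval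
  · exact (pow_eq_one_iff_left (by omega)).1 hval

theorem s_sq_sub_eleven_s_sub_one_general (s y : ℤ) (l : ℕ)
    (hs : IsPrimePow s.natAbs) (hy : 0 < y)
    (hl : 1 < l)
    (heq : s ^ 2 - 11 * s - 1 = y ^ l ∨ s ^ 2 - 11 * s - 1 = -y ^ l) :
    (s = 13 ∧ y = 5 ∧ l = 2) ∨
    (s = -2 ∧ y = 5 ∧ l = 2) ∨
    (s = 37 ∧ y = 31 ∧ l = 2) ∨
    (s = 11 ∧ y = 1) ∨
    (s = 8 ∧ y = 5 ∧ l = 2) ∨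
    (s = 3 ∧ y = 5 ∧ l = 2) ∨
    (s = -7 ∧ y = 5 ∧ l = 3) ∨
    (Odd l ∧ s ^ 2 - 11 * s - 1 = y ^ l) := by
  lift y to ℕ using hy.le
  rcases heq with h | h
  · rcases Nat.even_or_odd l with ⟨m, rfl⟩ | hodd
    · rcases eq_of_sq_sub_eleven_mul_sub_one_eq_pow_even hs (by omega) h with
        ⟨rfl | rfl, rfl, rfl⟩ | ⟨rfl, rfl, rfl⟩ <;> simp
    · exact Or.inr <| Or.inr <| Or.inr <| Or.inr <| Or.inr <| Or.inr <| Or.inr ⟨hodd, h⟩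
  · rcases eq_of_sq_sub_eleven_mul_sub_one_eq_neg_pow hs hl h with
      ⟨rfl | rfl, rfl, rfl⟩ | ⟨rfl, rfl⟩ <;> simp

/-- If `|s|` is a prime power, `y > 0` is `1` or a prime power, `l > 1`, and
`s^2 - 11s - 1 = ±y^l`, then `(s, y, l)` is one of the listed solutions, or
`l` is odd and `s^2 - 11s - 1 = y^l`. -/
theorem s_sq_sub_eleven_s_sub_one (s y : ℤ) (l : ℕ)
    (hs : IsPrimePow s.natAbs) (hy : 0 < y)
    (hy' : y = 1 ∨ IsPrimePow y) (hl : 1 < l)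
    (heq : s ^ 2 - 11 * s - 1 = y ^ l ∨ s ^ 2 - 11 * s - 1 = -y ^ l) :
    (s = 13 ∧ y = 5 ∧ l = 2) ∨
    (s = -2 ∧ y = 5 ∧ l = 2) ∨
    (s = 37 ∧ y = 31 ∧ l = 2) ∨
    (s = 11 ∧ y = 1) ∨
    (s = 8 ∧ y = 5 ∧ l = 2) ∨
    (s = 3 ∧ y = 5 ∧ l = 2) ∨
    (s = -7 ∧ y = 5 ∧ l = 3) ∨
    (Odd l ∧ s ^ 2 - 11 * s - 1 = y ^ l) :=
  s_sq_sub_eleven_s_sub_one_general s y l hs hy hl heq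
end

section
/- There are no distinct primes p and q, positive integers m and n, and integers s, t with |s| = p^m and |t| = q^n, such that s^2 − 11·s·t − t^2 = ±1. -/
/-!
Every solution of `x ^ 2 - P x y - y ^ 2 = ±1` in positive `x` and nonnegative `y` is a pair
`(U (k + 1), U k)` of consecutive terms of the Lucas sequence `U (k + 2) = P U (k + 1) + U k`:
the map `(x, y) ↦ (y, x - P y)` negates the form and lowers `x + y`. Modulo `P` the sequence
alternates `0, 1`, and `U (2 j) = U j (U (j + 1) + U (j - 1))`. For an odd prime `P`, a
prime-power term of even index is therefore a power of `P` with a factor `≡ 1` or `≡ 2 mod P`;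
that factor must be `1`, which forces the term to be `U 2 = P`. Its neighbours `1` and
`P ^ 2 + 1 ≡ 2 mod 4` are not prime powers.
-/

lemma IsPrimePow.eq_one_of_dvd_of_not_dvd {n d P : ℕ} (hn : IsPrimePow n) (hP : P.Prime)
    (hPn : P ∣ n) (hd : d ∣ n) (hPd : ¬ P ∣ d) : d = 1 := by
  by_contra hd1
  obtain ⟨r, hr, hrd⟩ := Nat.exists_prime_and_dvd hd1
  obtain ⟨p, -, hp⟩ := isPrimePow_iff_unique_prime_dvd.mp hn
  exact hPd ((hp r ⟨hr, hrd.trans hd⟩).trans (hp P ⟨hP, hPn⟩).symm ▸ hrd)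

lemma not_isPrimePow_sq_add_one {P : ℕ} (hP : Odd P) (hP1 : 1 < P) : ¬ IsPrimePow (P ^ 2 + 1) := by
  intro h
  obtain ⟨q, k, hq, hk, hqk⟩ := (isPrimePow_nat_iff _).mp h
  obtain ⟨c, rfl⟩ := hP
  have hsq : (2 * c + 1) ^ 2 + 1 = 4 * (c ^ 2 + c) + 2 := by ring
  have h2 : 2 ∣ q ^ k := by rw [hqk, hsq]; exact ⟨2 * (c ^ 2 + c) + 1, by ring⟩
  obtain rfl : q = 2 :=
    ((Nat.prime_dvd_prime_iff_eq Nat.prime_two hq).mp (Nat.prime_two.dvd_of_dvd_pow h2)).symm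
  rw [hsq] at hqk
  rcases k with _ | _ | k
  · omega
  · omega
  · have : 4 ∣ 2 ^ (k + 2) := ⟨2 ^ k, by ring⟩
    omega

/-- The Lucas sequence `U_k(P, -1)`. -/
def lucasU (P : ℕ) : ℕ → ℕ
  | 0 => 0
  | 1 => 1
  | k + 2 => P * lucasU P (k + 1) + lucasU P k

section lucasU

variable {P : ℕ}

@[simp] lemma lucasU_zero : lucasU P 0 = 0 := rfl

@[simp] lemma lucasU_one : lucasU P 1 = 1 := rfl

lemma lucasU_add_two (k : ℕ) : lucasU P (k + 2) = P * lucasU P (k + 1) + lucasU P k := rfl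

lemma lucasU_pos (hP : 0 < P) : ∀ k, 0 < lucasU P (k + 1)
  | 0 => Nat.one_pos
  | k + 1 => by rw [lucasU_add_two]; have := lucasU_pos hP k; positivity

lemma le_lucasU_add_two (hP : 0 < P) (k : ℕ) : P ≤ lucasU P (k + 2) := by
  rw [lucasU_add_two]; have := lucasU_pos hP k; nlinarith

lemma lucasU_add_add_one (m n : ℕ) :
    lucasU P (m + n + 1) = lucasU P (m + 1) * lucasU P (n + 1) + lucasU P m * lucasU P n := by
  induction m generalizing n with
  | zero => simp
  | succ m ih =>
    rw [show m + 1 + n + 1 = m + (n + 1) + 1 by ring, ih, lucasU_add_two, lucasU_add_two]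
    ring

lemma lucasU_two_mul_add_two (j : ℕ) :
    lucasU P (2 * j + 2) = lucasU P (j + 1) * (lucasU P (j + 2) + lucasU P j) := by
  rw [show 2 * j + 2 = (j + 1) + j + 1 by ring, lucasU_add_add_one]
  ring

lemma lucasU_add_two_modEq (k : ℕ) : lucasU P (k + 2) ≡ lucasU P k [MOD P] := by
  rw [lucasU_add_two]
  exact Nat.mul_add_mod_self_left ..

lemma lucasU_two_mul_add_modEq (j r : ℕ) : lucasU P (2 * j + r) ≡ lucasU P r [MOD P] := by
  induction j with
  | zero => simp [Nat.ModEq.refl]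
  | succ j ih =>
    exact (show 2 * (j + 1) + r = 2 * j + r + 2 by ring) ▸ (lucasU_add_two_modEq _).trans ih

lemma eq_one_of_isPrimePow_lucasU_two_mul (hP : P.Prime) (hP2 : P ≠ 2) {j : ℕ} (hj : j ≠ 0)
    (h : IsPrimePow (lucasU P (2 * j))) : j = 1 := by
  obtain ⟨i, rfl⟩ := Nat.exists_eq_succ_of_ne_zero hj
  have hP_dvd : P ∣ lucasU P (2 * (i + 1)) :=
    Nat.modEq_zero_iff_dvd.mp (lucasU_two_mul_add_modEq (i + 1) 0)
  have hfac := lucasU_two_mul_add_two (P := P) i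
  rw [← show 2 * (i + 1) = 2 * i + 2 by ring] at hfac
  rcases Nat.even_or_odd' i with ⟨w, rfl | rfl⟩
  · have hmod : lucasU P (2 * w + 1) ≡ 1 [MOD P] := lucasU_two_mul_add_modEq w 1
    have h1 : lucasU P (2 * w + 1) = 1 :=
      h.eq_one_of_dvd_of_not_dvd hP hP_dvd (Dvd.intro _ hfac.symm)
        (by rw [hmod.dvd_iff dvd_rfl]; exact hP.not_dvd_one)
    rcases w with _ | w
    · rfl
    · have := le_lucasU_add_two hP.pos (2 * w + 1)
      have := hP.two_le
      grind
  · have hmod : lucasU P (2 * w + 1 + 2) + lucasU P (2 * w + 1) ≡ 2 [MOD P] :=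
      (show 2 * w + 1 + 2 = 2 * (w + 1) + 1 by ring) ▸
        (lucasU_two_mul_add_modEq (w + 1) 1).add (lucasU_two_mul_add_modEq w 1)
    have h1 : lucasU P (2 * w + 1 + 2) + lucasU P (2 * w + 1) = 1 :=
      h.eq_one_of_dvd_of_not_dvd hP hP_dvd (Dvd.intro_left _ hfac.symm)
        (by rw [hmod.dvd_iff dvd_rfl]; exact (Nat.prime_dvd_prime_iff_eq hP Nat.prime_two).not.mpr hP2)
    have : 0 < lucasU P (2 * w + 1 + 2) := lucasU_pos hP.pos (2 * w + 2)
    have := lucasU_pos hP.pos (2 * w)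
    omega

lemma not_isPrimePow_lucasU_and_lucasU_succ (hP : P.Prime) (hP2 : P ≠ 2) (k : ℕ) :
    ¬ (IsPrimePow (lucasU P k) ∧ IsPrimePow (lucasU P (k + 1))) := by
  rintro ⟨hk, hk1⟩
  rcases Nat.even_or_odd' k with ⟨j, rfl | rfl⟩
  · have hj : j ≠ 0 := by rintro rfl; exact not_isPrimePow_zero hk
    obtain rfl := eq_one_of_isPrimePow_lucasU_two_mul hP hP2 hj hk
    refine not_isPrimePow_sq_add_one (hP.odd_of_ne_two hP2) hP.one_lt ?_
    simpa [lucasU_add_two, sq] using hk1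
  · obtain rfl : j = 0 := Nat.succ_injective <|
      eq_one_of_isPrimePow_lucasU_two_mul hP hP2 j.succ_ne_zero (by simpa [mul_add] using hk1)
    exact not_isPrimePow_one hk

lemma exists_eq_lucasU_of_isUnit (hP : 0 < P) {x y : ℤ} (hx : 0 < x) (hy : 0 ≤ y)
    (h : IsUnit (x ^ 2 - P * x * y - y ^ 2)) : ∃ k, x = lucasU P (k + 1) ∧ y = lucasU P k := by
  induction hn : (x + y).toNat using Nat.strong_induction_on generalizing x y with
  | _ n ih =>
  rcases hy.eq_or_lt with rfl | hy
  · have : x = 1 := by rcases Int.isUnit_iff.mp h with h | h <;> nlinarith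
    exact ⟨0, by simpa using this, rfl⟩
  · have hPy : P * y ≤ x := by rcases Int.isUnit_iff.mp h with h | h <;> nlinarith
    have hyPy : y ≤ P * y := le_mul_of_one_le_left hy.le (by exact_mod_cast hP)
    have h' : IsUnit (y ^ 2 - P * y * (x - P * y) - (x - P * y) ^ 2) := by
      convert h.neg using 1; ring
    obtain ⟨k, hyk, hk⟩ := ih _ (by omega) hy (by omega) h' rfl
    refine ⟨k + 1, ?_, hyk⟩
    push_cast [lucasU_add_two]
    rw [← hyk, ← hk]
    ring

lemma exists_natAbs_eq_lucasU_of_isUnit (hP : 0 < P) {s t : ℤ} (hs : s ≠ 0) (ht : t ≠ 0)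
    (h : IsUnit (s ^ 2 - P * s * t - t ^ 2)) :
    ∃ k, (s.natAbs = lucasU P (k + 1) ∧ t.natAbs = lucasU P k) ∨
      (t.natAbs = lucasU P (k + 1) ∧ s.natAbs = lucasU P k) := by
  simp only [← Int.natCast_inj, Int.natCast_natAbs]
  rcases le_or_gt 0 (s * t) with hst | hst
  · have e : |s| ^ 2 - P * |s| * |t| - |t| ^ 2 = s ^ 2 - P * s * t - t ^ 2 := by
      rw [sq_abs, sq_abs, mul_assoc, ← abs_mul, abs_of_nonneg hst]; ring
    obtain ⟨k, hk⟩ := exists_eq_lucasU_of_isUnit hP (abs_pos.mpr hs) (abs_nonneg t) (e ▸ h)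
    exact ⟨k, .inl hk⟩
  · have e : |t| ^ 2 - P * |t| * |s| - |s| ^ 2 = -(s ^ 2 - P * s * t - t ^ 2) := by
      rw [sq_abs, sq_abs, mul_assoc, ← abs_mul, abs_of_neg (by linarith)]; ring
    obtain ⟨k, hk⟩ := exists_eq_lucasU_of_isUnit hP (abs_pos.mpr ht) (abs_nonneg s) (e ▸ h.neg)
    exact ⟨k, .inr hk⟩

end lucasU

/-- There are no distinct primes `p, q`, positive integers `m, n`, and integers
`s, t` with `|s| = p^m`, `|t| = q^n`, such that `s^2 - 11st - t^2 = ±1`. -/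
theorem no_prime_power_pell_solutions :
    ¬ ∃ (p q : ℕ) (m n : ℕ) (s t : ℤ),
      p.Prime ∧ q.Prime ∧ p ≠ q ∧ 1 ≤ m ∧ 1 ≤ n ∧
      s.natAbs = p ^ m ∧ t.natAbs = q ^ n ∧
      (s ^ 2 - 11 * s * t - t ^ 2 = 1 ∨ s ^ 2 - 11 * s * t - t ^ 2 = -1) := by
  rintro ⟨p, q, m, n, s, t, hp, hq, -, hm, hn, hs, ht, hunit⟩
  have hps : IsPrimePow s.natAbs := hs ▸ hp.isPrimePow.pow (by omega)
  have hqt : IsPrimePow t.natAbs := ht ▸ hq.isPrimePow.pow (by omega)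
  have h11 : Nat.Prime 11 := by norm_num
  obtain ⟨k, ⟨h1, h0⟩ | ⟨h1, h0⟩⟩ := exists_natAbs_eq_lucasU_of_isUnit (P := 11) h11.pos
    (Int.natAbs_ne_zero.mp hps.ne_zero) (Int.natAbs_ne_zero.mp hqt.ne_zero)
    (by exact_mod_cast Int.isUnit_iff.mpr hunit)
  · exact not_isPrimePow_lucasU_and_lucasU_succ h11 (by norm_num) k ⟨h0 ▸ hqt, h1 ▸ hps⟩
  · exact not_isPrimePow_lucasU_and_lucasU_succ h11 (by norm_num) k ⟨h0 ▸ hps, h1 ▸ hqt⟩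
end

section
/- If p and q are primes and a, b ≥ 1 are integers with p^(2a) − 16 = q^b, then (p, a, q, b) = (5, 1, 3, 2). -/
/-!
Put `x = p ^ a`. Then `(x - 4) (x + 4) = q ^ b`, so both factors are powers of `q`.
If `x - 4 = 1` then `x = 5` and `q ^ b = 9`. Otherwise `q` divides both factors, hence their
difference `8`, so `q = 2`; the only powers of two differing by `8` are `8` and `16`, giving
`x = 12`, which is not a prime power.
-/

lemma Nat.Prime.eq_two_and_eq_three_of_pow_add_eight_eq_pow {q s t : ℕ} (hq : q.Prime)
    (hs : s ≠ 0) (h : q ^ s + 8 = q ^ t) : q = 2 ∧ s = 3 := by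
  have hst : s ≤ t := (Nat.pow_le_pow_iff_right hq.one_lt).mp (by omega)
  have hdvd : q ^ s ∣ 8 := (Nat.dvd_add_right dvd_rfl).mp (h ▸ pow_dvd_pow q hst)
  have hq2 : q = 2 := (Nat.prime_dvd_prime_iff_eq hq Nat.prime_two).mp
    (hq.dvd_of_dvd_pow (n := 3) ((dvd_pow_self q hs).trans hdvd))
  subst hq2
  have hs3 : s ≤ 3 := (Nat.pow_dvd_pow_iff_le_right (by norm_num)).mp hdvd
  have ht4 : t ≤ 4 := (Nat.pow_le_pow_iff_right (by norm_num)).mp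
    (h ▸ (by grw [hs3] <;> norm_num : 2 ^ s + 8 ≤ 2 ^ 4))
  interval_cases s <;> interval_cases t <;> simp_all

lemma eq_five_or_eq_twelve_of_sq_eq_prime_pow_add_sixteen {x q b : ℕ} (hq : q.Prime)
    (h : x ^ 2 = q ^ b + 16) : x = 5 ∨ x = 12 := by
  have hx : 4 < x := by
    by_contra! hx
    have : x ^ 2 ≤ 4 ^ 2 := Nat.pow_le_pow_left hx 2
    have : 0 < q ^ b := pow_pos hq.pos b
    omega
  obtain ⟨y, rfl⟩ : ∃ y, x = y + 4 := ⟨x - 4, by omega⟩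
  have hfac : y * (y + 8) = q ^ b := by nlinarith
  obtain ⟨s, -, hys⟩ := (Nat.dvd_prime_pow hq).mp (Dvd.intro _ hfac)
  obtain ⟨t, -, hyt⟩ := (Nat.dvd_prime_pow hq).mp (Dvd.intro_left _ hfac)
  rcases eq_or_ne s 0 with rfl | hs
  · simp_all
  · obtain ⟨rfl, rfl⟩ := hq.eq_two_and_eq_three_of_pow_add_eight_eq_pow hs (hys ▸ hyt)
    omega

/-- If `p, q` are primes, `a, b ≥ 1` and `p^(2a) - 16 = q^b`, then
`(p, a, q, b) = (5, 1, 3, 2)`. -/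
theorem p_pow_two_a_sub_sixteen (p q a b : ℕ)
    (hp : p.Prime) (hq : q.Prime) (ha : 1 ≤ a) (hb : 1 ≤ b)
    (heq : (p : ℤ) ^ (2 * a) - 16 = (q : ℤ) ^ b) :
    p = 5 ∧ a = 1 ∧ q = 3 ∧ b = 2 := by
  have hsq : (p ^ a) ^ 2 = q ^ b + 16 := by
    rw [← pow_mul']
    exact_mod_cast (by linarith : (p : ℤ) ^ (2 * a) = q ^ b + 16)
  rcases eq_five_or_eq_twelve_of_sq_eq_prime_pow_add_sixteen hq hsq with h5 | h12
  · obtain ⟨rfl, rfl⟩ := Nat.prime_five.pow_eq_iff.mp h5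
    have h9 : q ^ b = 3 ^ 2 := by rw [h5] at hsq; omega
    obtain ⟨rfl, rfl⟩ := hq.pow_inj' Nat.prime_three (by omega) two_ne_zero h9
    exact ⟨rfl, rfl, rfl, rfl⟩
  · exact absurd (h12 ▸ hp.isPrimePow.pow (by omega)) (by decide)
end

section
/- Let s and t be coprime integers and set D = s^5·t^5·(s^2 − 11st − t^2). If D ≠ 0 and D has exactly two distinct prime divisors p and q, then either |D| ∈ {2^5·5^2, 2^15·5^2, 3^5·5^2, 13^5·5^2, 37^5·31^2, 7^5·5^3}, or (after possibly swapping p and q) |D| = p^(5k)·q^l for some integers k ≥ 1 and odd l ≥ 1. -/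
/-!
The factors `s`, `t` and `s² - 11st - t²` of `D` are pairwise coprime, so with only two primes
available one of them is a unit. As `D(t, -s) = D(s, t)`, this leaves two cases.

If `t = ±1`, then `|D| = |r|⁵ |r² - 11r - 1|` with `r = st`, the two factors are powers of the two
primes, and the second exponent is odd unless `r² - 11r - 1 = ±w²`, i.e.
`(2r - 11)² ∓ (2w)² = 125`; the few solutions of this give the exceptional values.

If `s² - 11st - t² = ±1`, then `|D| = |st|⁵` with `|s|`, `|t|` prime powers, and it suffices that
the exponent of `t` (of `s` for `-1`) is odd. Were it even, `z = |2s - 11t|` would satisfy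
`z² - 4 = 125 P⁴ᵐ`; splitting `(z - 2)(z + 2)` into coprime factors (after removing a factor
`16` when `P = 2`) forces `P⁴ᵐ ∈ {121, 124, 126, 129}`, and none of these is a fourth power.
-/

def fiveTorsionDisc (s t : ℤ) : ℤ := s ^ 5 * t ^ 5 * (s ^ 2 - 11 * s * t - t ^ 2)

def TwoPrimeDiscForm (n p q : ℕ) : Prop :=
  n = 2 ^ 5 * 5 ^ 2 ∨ n = 2 ^ 15 * 5 ^ 2 ∨ n = 3 ^ 5 * 5 ^ 2 ∨ n = 13 ^ 5 * 5 ^ 2 ∨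
    n = 37 ^ 5 * 31 ^ 2 ∨ n = 7 ^ 5 * 5 ^ 3 ∨
    ∃ k l : ℕ, 1 ≤ k ∧ Odd l ∧ (n = p ^ (5 * k) * q ^ l ∨ n = q ^ (5 * k) * p ^ l)

theorem twoPrimeDiscForm_of_eq {n p q P Q k l : ℕ} (hk : 0 < k) (hl : Odd l)
    (hn : n = P ^ (5 * k) * Q ^ l) (hPQ : (P = p ∧ Q = q) ∨ (P = q ∧ Q = p)) :
    TwoPrimeDiscForm n p q := by
  refine .inr <| .inr <| .inr <| .inr <| .inr <| .inr ⟨k, l, hk, hl, ?_⟩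
  rcases hPQ with ⟨rfl, rfl⟩ | ⟨rfl, rfl⟩
  exacts [.inl hn, .inr hn]

theorem pow_four_ne_of_lt_of_lt {X n : ℕ} (h81 : 81 < n) (h256 : n < 256) : X ^ 4 ≠ n := by
  rintro rfl
  rcases le_or_gt X 3 with h | h
  · have := Nat.pow_le_pow_left h 4; omega
  · have := Nat.pow_le_pow_left (show 4 ≤ X from h) 4; omega

theorem Nat.Coprime.prime_pow_dvd_or {x y P e : ℕ} (hxy : x.Coprime y) (hP : P.Prime)
    (h : P ^ e ∣ x * y) : P ^ e ∣ x ∨ P ^ e ∣ y := by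
  rcases Nat.eq_zero_or_pos e with rfl | he
  · simp
  exact (hxy.isPrimePow_dvd_mul (hP.isPrimePow.pow he.ne')).1 h

theorem Nat.eq_one_or_eq_one_or_of_mul_eq_mul {x y M N : ℕ} (hMN : M.Coprime N)
    (hM : M ∣ x ∨ M ∣ y) (hN : N ∣ x ∨ N ∣ y) (h : x * y = M * N) (hx : x ≠ 0) (hy : y ≠ 0) :
    x = 1 ∨ y = 1 ∨ (x = M ∧ y = N) ∨ (x = N ∧ y = M) := by
  wlog hMx : M ∣ x generalizing x y
  · have := this hM.symm hN.symm (by rw [mul_comm, h]) hy hx (hM.resolve_left hMx)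
    tauto
  rcases hN with hNx | ⟨b, rfl⟩
  · have hle := Nat.le_of_dvd (Nat.pos_of_ne_zero hx) (hMN.mul_dvd_of_dvd_of_dvd hMx hNx)
    rw [← h] at hle
    have : y ≤ 1 := by nlinarith [Nat.pos_of_ne_zero hx]
    omega
  · obtain ⟨a, rfl⟩ := hMx
    have hMN0 : M * N ≠ 0 := h ▸ mul_ne_zero hx hy
    have hab : a * b = 1 := mul_left_cancel₀ hMN0 (by rw [mul_one]; linarith [h])
    obtain ⟨rfl, rfl⟩ := mul_eq_one.1 hab
    simp

theorem Nat.mul_add_ne_125_mul_pow_four {u g P n : ℕ} (hP : P.Prime) (hg : g = 1 ∨ g = 4)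
    (hcop : u.Coprime (u + g)) : u * (u + g) ≠ 125 * (P ^ n) ^ 4 := by
  intro h
  have hY : 0 < (P ^ n) ^ 4 := by have := hP.pos; positivity
  have hu : u ≠ 0 := by rintro rfl; omega
  have hsplit : u = 1 ∨ u + g = 1 ∨ (u = 125 ∧ u + g = (P ^ n) ^ 4) ∨
      (u = (P ^ n) ^ 4 ∧ u + g = 125) := by
    rw [← pow_mul] at h ⊢
    rcases eq_or_ne P 5 with rfl | hP5
    · have h5 : u * (u + g) = 5 ^ (n * 4 + 3) * 1 := by rw [h]; ring
      have := Nat.eq_one_or_eq_one_or_of_mul_eq_mul (Nat.coprime_one_right _)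
        (hcop.prime_pow_dvd_or Nat.prime_five (Dvd.intro 1 h5.symm)) (.inl (one_dvd u)) h5
        hu (by omega)
      tauto
    · have h5 : u * (u + g) = 5 ^ 3 * P ^ (n * 4) := by rw [h]; ring
      exact Nat.eq_one_or_eq_one_or_of_mul_eq_mul
        (((Nat.coprime_primes Nat.prime_five hP).2 (Ne.symm hP5)).pow 3 _)
        (hcop.prime_pow_dvd_or Nat.prime_five (Dvd.intro _ h5.symm))
        (hcop.prime_pow_dvd_or hP (Dvd.intro_left _ h5.symm)) h5 hu (by omega)
  rcases hsplit with rfl | h1 | ⟨rfl, h1⟩ | ⟨h1, h2⟩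
  · omega
  · omega
  · exact pow_four_ne_of_lt_of_lt (by omega) (by omega) h1.symm
  · exact pow_four_ne_of_lt_of_lt (by omega) (by omega) h1.symm

theorem Nat.sq_ne_125_mul_pow_four_add_four {z P m : ℕ} (hP : P.Prime) (hm : 0 < m) :
    z ^ 2 ≠ 125 * (P ^ m) ^ 4 + 4 := by
  intro hz
  rcases hP.eq_two_or_odd' with rfl | hodd
  · obtain ⟨n, rfl⟩ : ∃ n, m = n + 1 := ⟨m - 1, by omega⟩
    have hz' : z ^ 2 = 4 * (500 * (2 ^ n) ^ 4 + 1) := by rw [hz]; ring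
    obtain ⟨w, rfl⟩ : Even z :=
      (Nat.even_pow.1 (hz' ▸ (by decide : Even 4).mul_right _)).1
    have hw : w ^ 2 = 500 * (2 ^ n) ^ 4 + 1 := by nlinarith
    have hw2 : Odd (w ^ 2) := by rw [hw]; exact ((by decide : Even 500).mul_right _).add_one
    obtain ⟨u, rfl⟩ := (Nat.odd_pow_iff two_ne_zero).1 hw2
    exact Nat.mul_add_ne_125_mul_pow_four Nat.prime_two (.inl rfl)
      (Nat.coprime_self_add_right.2 (Nat.coprime_one_right _)) (by nlinarith)
  · have hz2 : Odd (z ^ 2) := hz ▸ (Odd.mul (by decide) (hodd.pow.pow)).add_even (by decide)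
    have hz2' : 2 ≤ z := by by_contra! h; interval_cases z <;> omega
    obtain ⟨A, rfl⟩ : ∃ A, z = A + 2 := ⟨z - 2, by omega⟩
    have hA : Odd A := by
      obtain ⟨k, hk⟩ := (Nat.odd_pow_iff two_ne_zero).1 hz2
      exact ⟨k - 1, by omega⟩
    exact Nat.mul_add_ne_125_mul_pow_four hP (.inr rfl)
      (Nat.coprime_self_add_right.2 (by simpa using (Nat.coprime_two_right.2 hA).pow_right 2))
      (by nlinarith)

theorem sq_sub_mul_sub_sq_ne_one {S T : ℤ} {Q m : ℕ} (hQ : Q.Prime) (hm : 0 < m)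
    (hT : T.natAbs = Q ^ (2 * m)) : S ^ 2 - 11 * S * T - T ^ 2 ≠ 1 := by
  intro h
  refine Nat.sq_ne_125_mul_pow_four_add_four hQ hm (z := (2 * S - 11 * T).natAbs) ?_
  have hT2 : T ^ 2 = ((Q : ℤ) ^ m) ^ 4 := by rw [← Int.natAbs_sq T, hT]; push_cast; ring
  zify
  rw [sq_abs]
  linear_combination 4 * h + 125 * hT2

theorem Finset.eq_singleton_pair_of_union_eq_pair {α : Type*} [DecidableEq α] {S T : Finset α}
    {p q : α} (hpq : p ≠ q) (h : S ∪ T = {p, q}) (hST : Disjoint S T) (hS : S.Nonempty)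
    (hT : T.Nonempty) : (S = {p} ∧ T = {q}) ∨ (S = {q} ∧ T = {p}) := by
  obtain ⟨a, ha⟩ := hS
  obtain ⟨b, hb⟩ := hT
  simp only [Finset.ext_iff, Finset.mem_union, Finset.mem_insert, Finset.mem_singleton] at h ⊢
  rw [Finset.disjoint_left] at hST
  grind

theorem Nat.exists_eq_pow_of_primeFactors_eq_singleton {n P : ℕ} (h : n.primeFactors = {P}) :
    ∃ k, 0 < k ∧ n = P ^ k := by
  obtain ⟨P', k, hP', hk, rfl⟩ := (isPrimePow_nat_iff n).1
    (isPrimePow_iff_card_primeFactors_eq_one.2 (by simp [h]))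
  rw [Nat.primeFactors_prime_pow hk.ne' hP', Finset.singleton_inj] at h
  exact ⟨k, hk, by rw [h]⟩

theorem Nat.exists_eq_pow_of_primeFactors_mul_eq_pair {x y p q : ℕ} (hxy : x.Coprime y)
    (hx : x ≠ 1) (hy : y ≠ 1) (hpq : p ≠ q) (h : (x * y).primeFactors = {p, q}) :
    ∃ P Q i j, Q.Prime ∧ 0 < i ∧ 0 < j ∧ x = P ^ i ∧ y = Q ^ j ∧
      ((P = p ∧ Q = q) ∨ (P = q ∧ Q = p)) := by
  have hxy1 : 1 < x * y := Nat.nonempty_primeFactors.1 (h ▸ Finset.insert_nonempty _ _)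
  have hx0 : x ≠ 0 := by rintro rfl; simp at hxy1
  have hy0 : y ≠ 0 := by rintro rfl; simp at hxy1
  rw [hxy.primeFactors_mul] at h
  rcases Finset.eq_singleton_pair_of_union_eq_pair hpq h hxy.disjoint_primeFactors
    (Nat.nonempty_primeFactors.2 (by omega)) (Nat.nonempty_primeFactors.2 (by omega))
    with ⟨hxP, hyQ⟩ | ⟨hxP, hyQ⟩ <;>
  · obtain ⟨i, hi, rfl⟩ := Nat.exists_eq_pow_of_primeFactors_eq_singleton hxP
    obtain ⟨j, hj, rfl⟩ := Nat.exists_eq_pow_of_primeFactors_eq_singleton hyQ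
    exact ⟨_, _, i, j, Nat.prime_of_mem_primeFactors (hyQ ▸ Finset.mem_singleton_self _),
      hi, hj, rfl, rfl, by tauto⟩

theorem Nat.eq_one_or_eq_one_or_eq_one_of_card_primeFactors_lt_three {a b c : ℕ}
    (hab : a.Coprime b) (hac : a.Coprime c) (hbc : b.Coprime c) (h0 : a * b * c ≠ 0)
    (h : (a * b * c).primeFactors.card < 3) : a = 1 ∨ b = 1 ∨ c = 1 := by
  by_contra! hne
  simp only [ne_eq, mul_eq_zero, not_or] at h0
  have hpos : ∀ n : ℕ, n ≠ 0 → n ≠ 1 → 0 < n.primeFactors.card := fun n h0 h1 ↦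
    Finset.card_pos.2 (Nat.nonempty_primeFactors.2 (by omega))
  rw [(Nat.Coprime.mul_left hac hbc).primeFactors_mul,
    Finset.card_union_of_disjoint (Nat.Coprime.mul_left hac hbc).disjoint_primeFactors,
    hab.primeFactors_mul, Finset.card_union_of_disjoint hab.disjoint_primeFactors] at h
  have := hpos a h0.1.1 hne.1
  have := hpos b h0.1.2 hne.2.1
  have := hpos c h0.2 hne.2.2
  omega

theorem eq_of_sq_sub_mul_sub_one_eq_sq {r w : ℤ} (h : r ^ 2 - 11 * r - 1 = w ^ 2) :
    r = 37 ∨ r = -26 ∨ r = 13 ∨ r = -2 := by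
  have hfac : (2 * r - 11 - 2 * w) * (2 * r - 11 + 2 * w) = 125 := by linear_combination 4 * h
  have hd : (2 * r - 11 - 2 * w).natAbs ∈ Nat.divisors 125 := by
    simpa using Int.natAbs_dvd_natAbs.2 (Dvd.intro _ hfac)
  simp only [Nat.divisors_ofNat, Finset.mem_insert, Finset.mem_singleton] at hd
  rcases hd with hd | hd | hd | hd <;> rcases Int.natAbs_eq_iff.1 hd with hd | hd <;>
    rw [hd] at hfac <;> omega

theorem eq_of_sq_sub_mul_sub_one_eq_neg_sq {r w : ℤ} (h : r ^ 2 - 11 * r - 1 = -w ^ 2) :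
    r = 0 ∨ r = 11 ∨ r = 3 ∨ r = 8 := by
  have hr0 : 0 ≤ r := by nlinarith
  have hr11 : r ≤ 11 := by nlinarith
  have hw : w ^ 2 ≤ 31 := by nlinarith [sq_nonneg (2 * r - 11)]
  obtain ⟨hw1, hw2⟩ : -5 ≤ w ∧ w ≤ 5 := ⟨by nlinarith, by nlinarith⟩
  interval_cases r <;> interval_cases w <;> omega

theorem natAbs_fiveTorsionDisc (s t : ℤ) : (fiveTorsionDisc s t).natAbs =
    s.natAbs ^ 5 * t.natAbs ^ 5 * (s ^ 2 - 11 * s * t - t ^ 2).natAbs := by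
  simp [fiveTorsionDisc, Int.natAbs_mul, Int.natAbs_pow]

theorem fiveTorsionDisc_swap (s t : ℤ) : fiveTorsionDisc t (-s) = fiveTorsionDisc s t := by
  unfold fiveTorsionDisc; ring

theorem fiveTorsionDisc_of_natAbs_eq_one {s t : ℤ} (ht : t.natAbs = 1) :
    fiveTorsionDisc s t = fiveTorsionDisc (s * t) 1 := by
  rcases Int.natAbs_eq_iff.1 ht with rfl | rfl <;> unfold fiveTorsionDisc <;> ring

theorem IsCoprime.sq_sub_mul_sub_sq_left {s t : ℤ} (h : IsCoprime s t) :
    IsCoprime s (s ^ 2 - 11 * s * t - t ^ 2) := by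
  have := (h.pow_right (n := 2)).neg_right.add_mul_left_right (s - 11 * t)
  rwa [show -t ^ 2 + s * (s - 11 * t) = s ^ 2 - 11 * s * t - t ^ 2 by ring] at this

theorem IsCoprime.sq_sub_mul_sub_sq_right {s t : ℤ} (h : IsCoprime s t) :
    IsCoprime t (s ^ 2 - 11 * s * t - t ^ 2) := by
  have := (h.symm.pow_right (n := 2)).add_mul_left_right (-11 * s - t)
  rwa [show s ^ 2 + t * (-11 * s - t) = s ^ 2 - 11 * s * t - t ^ 2 by ring] at this

theorem natAbs_eq_one_of_primeFactors_fiveTorsionDisc_eq_pair {s t : ℤ} {p q : ℕ}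
    (hst : IsCoprime s t) (hfac : (fiveTorsionDisc s t).natAbs.primeFactors = {p, q}) :
    s.natAbs = 1 ∨ t.natAbs = 1 ∨ (s ^ 2 - 11 * s * t - t ^ 2).natAbs = 1 := by
  have h0 : (fiveTorsionDisc s t).natAbs ≠ 0 :=
    (Nat.nonempty_primeFactors.1 (hfac ▸ Finset.insert_nonempty _ _)).ne_bot
  rw [natAbs_fiveTorsionDisc] at h0 hfac
  have hcard := hfac ▸ Finset.card_le_two.trans_lt (by norm_num : 2 < 3)
  simpa [pow_eq_one_iff] using Nat.eq_one_or_eq_one_or_eq_one_of_card_primeFactors_lt_three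
    (Nat.Coprime.pow 5 5 (Int.isCoprime_iff_nat_coprime.1 hst))
    ((Int.isCoprime_iff_nat_coprime.1 hst.sq_sub_mul_sub_sq_left).pow_left 5)
    ((Int.isCoprime_iff_nat_coprime.1 hst.sq_sub_mul_sub_sq_right).pow_left 5) h0 hcard

theorem twoPrimeDiscForm_fiveTorsionDisc_one_of_isSquare {r : ℤ} {p q : ℕ} (hpq : p ≠ q)
    (hfac : (fiveTorsionDisc r 1).natAbs.primeFactors = {p, q})
    (hsq : IsSquare (r ^ 2 - 11 * r - 1).natAbs) :
    TwoPrimeDiscForm (fiveTorsionDisc r 1).natAbs p q := by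
  obtain ⟨w, hw⟩ := hsq
  have hcard := congrArg Finset.card hfac
  rw [Finset.card_pair hpq] at hcard
  rcases Int.natAbs_eq (r ^ 2 - 11 * r - 1) with h | h <;> rw [hw] at h <;> push_cast at h
  · rcases eq_of_sq_sub_mul_sub_one_eq_sq (w := w) (by rw [h]; ring) with
      rfl | rfl | rfl | rfl
    · norm_num [TwoPrimeDiscForm, fiveTorsionDisc]
    · norm_num [fiveTorsionDisc] at hcard
      simp [Nat.primeFactors] at hcard
    · norm_num [TwoPrimeDiscForm, fiveTorsionDisc]
    · norm_num [TwoPrimeDiscForm, fiveTorsionDisc]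
  · rcases eq_of_sq_sub_mul_sub_one_eq_neg_sq (w := w) (by rw [h]; ring) with
      rfl | rfl | rfl | rfl
    · norm_num [fiveTorsionDisc] at hcard
    · norm_num [fiveTorsionDisc] at hcard
      simp [Nat.primeFactors] at hcard
    · norm_num [TwoPrimeDiscForm, fiveTorsionDisc]
    · norm_num [TwoPrimeDiscForm, fiveTorsionDisc]

theorem twoPrimeDiscForm_fiveTorsionDisc_one {r : ℤ} {p q : ℕ} (hpq : p ≠ q)
    (hfac : (fiveTorsionDisc r 1).natAbs.primeFactors = {p, q}) :
    TwoPrimeDiscForm (fiveTorsionDisc r 1).natAbs p q := by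
  by_cases hsq : IsSquare (r ^ 2 - 11 * r - 1).natAbs
  · exact twoPrimeDiscForm_fiveTorsionDisc_one_of_isSquare hpq hfac hsq
  have hD : (fiveTorsionDisc r 1).natAbs = r.natAbs ^ 5 * (r ^ 2 - 11 * r - 1).natAbs := by
    simp [natAbs_fiveTorsionDisc]
  have hr : r.natAbs ≠ 1 := by
    intro h1
    have hcard := congrArg Finset.card hfac
    rw [Finset.card_pair hpq] at hcard
    rcases Int.natAbs_eq_iff.1 h1 with rfl | rfl <;> norm_num [fiveTorsionDisc] at hcard
  have hy : (r ^ 2 - 11 * r - 1).natAbs ≠ 1 := fun h1 ↦ hsq ⟨1, by rw [h1]⟩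
  have hcop : r.natAbs.Coprime (r ^ 2 - 11 * r - 1).natAbs := by
    simpa using
      Int.isCoprime_iff_nat_coprime.1 (isCoprime_one_right (x := r)).sq_sub_mul_sub_sq_left
  rw [hD, (hcop.pow_left 5).primeFactors_mul, Nat.primeFactors_pow _ (by norm_num),
    ← hcop.primeFactors_mul] at hfac
  obtain ⟨P, Q, i, l, -, hi, -, hrP, hyQ, hPQ⟩ :=
    Nat.exists_eq_pow_of_primeFactors_mul_eq_pair hcop hr hy hpq hfac
  have hl : Odd l := by
    refine Nat.not_even_iff_odd.1 fun ⟨m, hm⟩ ↦ hsq ⟨Q ^ m, ?_⟩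
    rw [hyQ, hm, pow_add]
  rw [hD, hrP, hyQ]
  exact twoPrimeDiscForm_of_eq hi hl (by ring) hPQ

theorem twoPrimeDiscForm_of_sq_sub_mul_sub_sq_eq_one {s t : ℤ} {p q : ℕ} (hst : IsCoprime s t)
    (hs : s.natAbs ≠ 1) (ht : t.natAbs ≠ 1) (hB : s ^ 2 - 11 * s * t - t ^ 2 = 1) (hpq : p ≠ q)
    (hfac : (fiveTorsionDisc s t).natAbs.primeFactors = {p, q}) :
    TwoPrimeDiscForm (fiveTorsionDisc s t).natAbs p q := by
  have hD : (fiveTorsionDisc s t).natAbs = (s.natAbs * t.natAbs) ^ 5 := by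
    simp [natAbs_fiveTorsionDisc, hB, mul_pow]
  rw [hD, Nat.primeFactors_pow _ (by norm_num)] at hfac
  obtain ⟨P, Q, i, j, hQ, hi, hj, hsP, htQ, hPQ⟩ :=
    Nat.exists_eq_pow_of_primeFactors_mul_eq_pair (Int.isCoprime_iff_nat_coprime.1 hst) hs ht hpq
      hfac
  obtain ⟨m, rfl⟩ | hjodd := Nat.even_or_odd j
  · exact absurd hB (sq_sub_mul_sub_sq_ne_one hQ (m := m) (by omega) (htQ.trans (by ring)))
  rw [hD, hsP, htQ]
  exact twoPrimeDiscForm_of_eq (l := 5 * j) hi (Nat.odd_mul.2 ⟨by decide, hjodd⟩) (by ring) hPQ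

theorem discriminant_five_torsion_general (s t : ℤ) (hst : IsCoprime s t)
    (D : ℤ) (hD : D = s ^ 5 * t ^ 5 * (s ^ 2 - 11 * s * t - t ^ 2))
    (p q : ℕ) (hpq : p ≠ q)
    (hfac : D.natAbs.primeFactors = {p, q}) :
    D.natAbs = 2 ^ 5 * 5 ^ 2 ∨ D.natAbs = 2 ^ 15 * 5 ^ 2 ∨
    D.natAbs = 3 ^ 5 * 5 ^ 2 ∨ D.natAbs = 13 ^ 5 * 5 ^ 2 ∨
    D.natAbs = 37 ^ 5 * 31 ^ 2 ∨ D.natAbs = 7 ^ 5 * 5 ^ 3 ∨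
    (∃ k l : ℕ, 1 ≤ k ∧ Odd l ∧
      (D.natAbs = p ^ (5 * k) * q ^ l ∨ D.natAbs = q ^ (5 * k) * p ^ l)) := by
  change D = fiveTorsionDisc s t at hD
  subst hD
  change TwoPrimeDiscForm (fiveTorsionDisc s t).natAbs p q
  by_cases ht : t.natAbs = 1
  · rw [fiveTorsionDisc_of_natAbs_eq_one ht] at hfac ⊢
    exact twoPrimeDiscForm_fiveTorsionDisc_one hpq hfac
  by_cases hs : s.natAbs = 1
  · rw [← fiveTorsionDisc_swap, fiveTorsionDisc_of_natAbs_eq_one (by simpa using hs)] at hfac ⊢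
    exact twoPrimeDiscForm_fiveTorsionDisc_one hpq hfac
  have hB := ((natAbs_eq_one_of_primeFactors_fiveTorsionDisc_eq_pair hst hfac).resolve_left
    hs).resolve_left ht
  rcases Int.natAbs_eq_iff.1 hB with hB | hB
  · exact twoPrimeDiscForm_of_sq_sub_mul_sub_sq_eq_one hst hs ht hB hpq hfac
  · rw [← fiveTorsionDisc_swap] at hfac ⊢
    exact twoPrimeDiscForm_of_sq_sub_mul_sub_sq_eq_one hst.symm.neg_right ht (by simpa using hs)
      (by linear_combination -hB) hpq hfac

/-- Discriminants of elliptic curves with a rational 5-torsion point having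
exactly two distinct prime divisors. -/
theorem discriminant_five_torsion (s t : ℤ) (hst : IsCoprime s t)
    (D : ℤ) (hD : D = s ^ 5 * t ^ 5 * (s ^ 2 - 11 * s * t - t ^ 2))
    (hD0 : D ≠ 0) (p q : ℕ) (hp : p.Prime) (hq : q.Prime) (hpq : p ≠ q)
    (hfac : D.natAbs.primeFactors = {p, q}) :
    D.natAbs = 2 ^ 5 * 5 ^ 2 ∨ D.natAbs = 2 ^ 15 * 5 ^ 2 ∨
    D.natAbs = 3 ^ 5 * 5 ^ 2 ∨ D.natAbs = 13 ^ 5 * 5 ^ 2 ∨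
    D.natAbs = 37 ^ 5 * 31 ^ 2 ∨ D.natAbs = 7 ^ 5 * 5 ^ 3 ∨
    (∃ k l : ℕ, 1 ≤ k ∧ Odd l ∧
      (D.natAbs = p ^ (5 * k) * q ^ l ∨ D.natAbs = q ^ (5 * k) * p ^ l)) :=
  discriminant_five_torsion_general s t hst D hD p q hpq hfac
end

section
/- Let s and t be coprime integers and set D = s^7·t^7·(s−t)^7·(s^3 − 8s^2t + 5st^2 + t^3). If D ≠ 0 and D has at most two distinct prime divisors, then D = −2^7·13. -/
/-!
The substitutions `(s, t) ↦ (-s, -t)` and `(s, t) ↦ (-t, s - t)` preserve `D` and coprimality,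
and the second permutes `s`, `t`, `s - t` cyclically up to sign. The factors `s`, `t`, `s - t`,
`f(s, t) = s³ - 8s²t + 5st² + t³` of `D` are pairwise coprime, so when `D` has at most two prime
divisors, one of any three of them is a unit. By symmetry we may take `s = 1`; then one of `t`,
`1 - t`, `f(1, t)` is `±1`. Since `f(1, t) - 1 = t (t² + 5t - 8)` and
`f(1, t) + 1 = (t - 1)(t² + 6t - 2)`, the last case forces `t ∈ {0, 1}`, where `D = 0`, so
`t = -1` or `t = 2`, and both give `D = -2⁷·13`.
-/

open Finset Function

theorem Nat.card_le_card_primeFactors_of_pairwise_coprime {ι : Type*} {s : Finset ι}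
    {a : ι → ℕ} {n : ℕ} (hn : n ≠ 0) (hdvd : ∀ i ∈ s, a i ∣ n) (hne : ∀ i ∈ s, a i ≠ 1)
    (hcop : (s : Set ι).Pairwise (Nat.Coprime on a)) : #s ≤ #n.primeFactors := by
  have hpos (i : ι) (hi : i ∈ s) : 1 ≤ #(a i).primeFactors := by
    have : a i ≠ 0 := fun h => hn (Nat.eq_zero_of_zero_dvd (h ▸ hdvd i hi))
    exact Finset.card_pos.2 (Nat.nonempty_primeFactors.2 (by have := hne i hi; omega))
  calc #s = ∑ i ∈ s, 1 := card_eq_sum_ones s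
    _ ≤ ∑ i ∈ s, #(a i).primeFactors := sum_le_sum hpos
    _ = #(s.biUnion fun i => (a i).primeFactors) :=
      (card_biUnion fun i hi j hj hij => (hcop hi hj hij).disjoint_primeFactors).symm
    _ ≤ #n.primeFactors :=
      card_le_card (biUnion_subset.2 fun i hi => Nat.primeFactors_mono (hdvd i hi) hn)

theorem Int.isUnit_or_isUnit_or_isUnit_of_card_primeFactors_le_two {n a b c : ℤ} (hn : n ≠ 0)
    (hcard : #n.natAbs.primeFactors ≤ 2) (ha : a ∣ n) (hb : b ∣ n) (hc : c ∣ n)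
    (hab : IsCoprime a b) (hac : IsCoprime a c) (hbc : IsCoprime b c) :
    IsUnit a ∨ IsUnit b ∨ IsUnit c := by
  by_contra! h
  have natAbs_coprime {x y : ℤ} (h : IsCoprime x y) : x.natAbs.Coprime y.natAbs :=
    Int.isCoprime_iff_gcd_eq_one.1 h
  have := Nat.card_le_card_primeFactors_of_pairwise_coprime (s := univ)
    (a := fun i => (![a, b, c] i).natAbs) (Int.natAbs_ne_zero.2 hn)
    (fun i _ => by fin_cases i <;> simpa using Int.natAbs_dvd_natAbs.2 ‹_›)
    (fun i _ => by fin_cases i <;> simp [← Int.isUnit_iff_natAbs_eq, h])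
    (fun i _ j _ hij => by
      fin_cases i <;> fin_cases j <;> simp only [onFun] at hij ⊢ <;> first
        | exact absurd rfl hij
        | exact natAbs_coprime ‹_›
        | exact natAbs_coprime (IsCoprime.symm ‹_›))
  rw [card_univ, Fintype.card_fin] at this
  omega

namespace SevenTorsion

def cubic (s t : ℤ) : ℤ := s ^ 3 - 8 * s ^ 2 * t + 5 * s * t ^ 2 + t ^ 3

def disc (s t : ℤ) : ℤ := s ^ 7 * t ^ 7 * (s - t) ^ 7 * cubic s t

theorem dvd_disc_left (s t : ℤ) : s ∣ disc s t :=
  Dvd.intro (s ^ 6 * t ^ 7 * (s - t) ^ 7 * cubic s t) (by unfold disc; ring)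

theorem dvd_disc_right (s t : ℤ) : t ∣ disc s t :=
  Dvd.intro (s ^ 7 * t ^ 6 * (s - t) ^ 7 * cubic s t) (by unfold disc; ring)

theorem sub_dvd_disc (s t : ℤ) : s - t ∣ disc s t :=
  Dvd.intro (s ^ 7 * t ^ 7 * (s - t) ^ 6 * cubic s t) (by unfold disc; ring)

theorem cubic_dvd_disc (s t : ℤ) : cubic s t ∣ disc s t :=
  Dvd.intro_left _ rfl

theorem disc_neg_neg (s t : ℤ) : disc (-s) (-t) = disc s t := by
  unfold disc cubic; ring

theorem disc_neg_sub (s t : ℤ) : disc (-t) (s - t) = disc s t := by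
  unfold disc cubic; ring

theorem eq_zero_or_eq_one_of_isUnit_cubic_one {t : ℤ} (h : IsUnit (cubic 1 t)) :
    t = 0 ∨ t = 1 := by
  rw [Int.isUnit_iff] at h
  unfold cubic at h
  have hbound : -7 ≤ t ∧ t ≤ 2 := by
    rcases h with h | h <;> constructor <;> nlinarith [sq_nonneg (t + 3), sq_nonneg (t - 1)]
  obtain ⟨hlo, hhi⟩ := hbound
  interval_cases t <;> omega

theorem disc_one_eq {t : ℤ} (h0 : disc 1 t ≠ 0) (hcard : #(disc 1 t).natAbs.primeFactors ≤ 2) :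
    disc 1 t = -(2 ^ 7 * 13) := by
  have ht : t ≠ 0 := by rintro rfl; simp [disc] at h0
  have ht1 : 1 - t ≠ 0 := fun h => h0 (by simp [disc, h])
  rcases Int.isUnit_or_isUnit_or_isUnit_of_card_primeFactors_le_two h0 hcard
    (dvd_disc_right 1 t) (sub_dvd_disc 1 t) (cubic_dvd_disc 1 t)
    ⟨1, 1, by ring⟩ ⟨-(t ^ 2 + 5 * t - 8), 1, by unfold cubic; ring⟩
    ⟨-(t ^ 2 + 6 * t - 2), -1, by unfold cubic; ring⟩ with h | h | h
  · rcases Int.isUnit_iff.1 h with rfl | rfl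
    · simp at ht1
    · norm_num [disc, cubic]
  · rcases Int.isUnit_iff.1 h with h | h
    · omega
    · obtain rfl : t = 2 := by omega
      norm_num [disc, cubic]
  · rcases eq_zero_or_eq_one_of_isUnit_cubic_one h with rfl | rfl
    · exact absurd rfl ht
    · simp at ht1

theorem disc_eq_of_isUnit_left {s t : ℤ} (hs : IsUnit s) (h0 : disc s t ≠ 0)
    (hcard : #(disc s t).natAbs.primeFactors ≤ 2) : disc s t = -(2 ^ 7 * 13) := by
  rcases Int.isUnit_iff.1 hs with rfl | rfl
  · exact disc_one_eq h0 hcard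
  · rw [← disc_neg_neg, neg_neg] at h0 hcard ⊢
    exact disc_one_eq h0 hcard

end SevenTorsion

open SevenTorsion in
/-- Discriminants of elliptic curves with a rational 7-torsion point having
at most two distinct prime divisors. -/
theorem discriminant_seven_torsion (s t : ℤ) (hst : IsCoprime s t)
    (D : ℤ)
    (hD : D = s ^ 7 * t ^ 7 * (s - t) ^ 7 *
      (s ^ 3 - 8 * s ^ 2 * t + 5 * s * t ^ 2 + t ^ 3))
    (hD0 : D ≠ 0) (hfac : D.natAbs.primeFactors.card ≤ 2) :
    D = -(2 ^ 7 * 13) := by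
  change D = disc s t at hD
  subst hD
  rcases Int.isUnit_or_isUnit_or_isUnit_of_card_primeFactors_le_two hD0 hfac
    (dvd_disc_left s t) (dvd_disc_right s t) (sub_dvd_disc s t) hst
    (by simpa using (IsCoprime.mul_sub_left_right_iff (z := 1)).2 hst)
    (by simpa using (IsCoprime.sub_mul_left_right_iff (z := 1)).2 hst.symm) with h | h | h
  · exact disc_eq_of_isUnit_left h hD0 hfac
  · rw [← disc_neg_sub] at hD0 hfac ⊢
    exact disc_eq_of_isUnit_left h.neg hD0 hfac
  · rw [← disc_neg_sub, ← disc_neg_sub] at hD0 hfac ⊢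
    exact disc_eq_of_isUnit_left (by simpa using h.neg) hD0 hfac
end

section
/- Let s and t be coprime integers and set D = s^8·t^2·(s−t)^8·(2s−t)^4·(8s^2 − 8st + t^2). If D ≠ 0 and D has at most two distinct prime divisors, then D = −2^11·3^8. -/
/-!
With `a = s` and `b = s - t` (so `2s - t = a + b` and `8s² - 8st + t² = a² + 6ab + b²`), `D` is
`a⁸ b⁸ (a - b)² (a + b)⁴ (a² + 6ab + b²)` with `a, b` coprime. Pairwise coprime non-units
dividing `D` contribute disjoint nonempty sets of primes, so no three of them exist. Applied to
`2, a, b` when `a, b` are odd, and to `b, a, a ∓ b` when `b` is even, this makes `a` or `b` equal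
to `±1`, and the symmetries of the form reduce to `a = 1`. Then `b, 1 - b, 1 + b` (`b` even) or
`b, (1 - b)/2, (1 + b)/2` (`b` odd) leave only `b ∈ {±2, ±3}`, and all of these but `b = -3` give
three primes.
-/

def eightTorsionDisc (a b : ℤ) : ℤ :=
  a ^ 8 * b ^ 8 * (a - b) ^ 2 * (a + b) ^ 4 * (a ^ 2 + 6 * a * b + b ^ 2)

theorem Int.isUnit_or_isUnit_or_isUnit_of_card_primeFactors_le_two_s16 {D x y z : ℤ} (hD : D ≠ 0)
    (hcard : D.natAbs.primeFactors.card ≤ 2) (hx : x ∣ D) (hy : y ∣ D) (hz : z ∣ D)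
    (hxy : IsCoprime x y) (hxz : IsCoprime x z) (hyz : IsCoprime y z) :
    IsUnit x ∨ IsUnit y ∨ IsUnit z := by
  have hxyz : x * y * z ∣ D := (hxz.mul_left hyz).mul_dvd (hxy.mul_dvd hx hy) hz
  have hsub := Nat.primeFactors_mono (Int.natAbs_dvd_natAbs.mpr hxyz) (Int.natAbs_ne_zero.mpr hD)
  rw [Int.isCoprime_iff_nat_coprime] at hxy hxz hyz
  have hxy_z := Nat.Coprime.mul_left hxz hyz
  rw [Int.natAbs_mul, Int.natAbs_mul, hxy_z.primeFactors_mul, hxy.primeFactors_mul] at hsub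
  have hle := (Finset.card_le_card hsub).trans hcard
  rw [Finset.card_union_of_disjoint (hxy.primeFactors_mul ▸ hxy_z.disjoint_primeFactors),
    Finset.card_union_of_disjoint hxy.disjoint_primeFactors] at hle
  have hpos {w : ℤ} (hw : w ∣ D) (h : ¬IsUnit w) : 0 < w.natAbs.primeFactors.card := by
    rw [Finset.card_pos, Finset.nonempty_iff_ne_empty, Ne, Nat.primeFactors_eq_empty,
      Int.natAbs_eq_zero, ← Int.isUnit_iff_natAbs_eq]
    rintro (rfl | hu)
    exacts [hD (zero_dvd_iff.mp hw), h hu]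
  by_contra! h
  have := hpos hx h.1
  have := hpos hy h.2.1
  have := hpos hz h.2.2
  omega

theorem eightTorsionDisc_comm (a b : ℤ) : eightTorsionDisc a b = eightTorsionDisc b a := by
  unfold eightTorsionDisc; ring

theorem eightTorsionDisc_neg_neg (a b : ℤ) : eightTorsionDisc (-a) (-b) = eightTorsionDisc a b := by
  unfold eightTorsionDisc; ring

theorem dvd_eightTorsionDisc_left (a b : ℤ) : a ∣ eightTorsionDisc a b :=
  ⟨a ^ 7 * b ^ 8 * (a - b) ^ 2 * (a + b) ^ 4 * (a ^ 2 + 6 * a * b + b ^ 2), by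
    unfold eightTorsionDisc; ring⟩

theorem dvd_eightTorsionDisc_right (a b : ℤ) : b ∣ eightTorsionDisc a b :=
  eightTorsionDisc_comm b a ▸ dvd_eightTorsionDisc_left b a

theorem sub_dvd_eightTorsionDisc (a b : ℤ) : a - b ∣ eightTorsionDisc a b :=
  ⟨a ^ 8 * b ^ 8 * (a - b) * (a + b) ^ 4 * (a ^ 2 + 6 * a * b + b ^ 2), by
    unfold eightTorsionDisc; ring⟩

theorem add_dvd_eightTorsionDisc (a b : ℤ) : a + b ∣ eightTorsionDisc a b :=
  ⟨a ^ 8 * b ^ 8 * (a - b) ^ 2 * (a + b) ^ 3 * (a ^ 2 + 6 * a * b + b ^ 2), by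
    unfold eightTorsionDisc; ring⟩

section

variable {a b : ℤ}

theorem isUnit_or_isUnit_of_eightTorsionDisc_of_odd (hD : eightTorsionDisc a b ≠ 0)
    (hcard : (eightTorsionDisc a b).natAbs.primeFactors.card ≤ 2) (hab : IsCoprime a b)
    (ha : Odd a) (hb : Odd b) : IsUnit a ∨ IsUnit b := by
  have h2 : IsCoprime 2 a ∧ IsCoprime 2 b := by
    simp only [Int.prime_two.coprime_iff_not_dvd, ← even_iff_two_dvd, Int.not_even_iff_odd]
    exact ⟨ha, hb⟩
  have h2D : 2 ∣ eightTorsionDisc a b :=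
    (even_iff_two_dvd.mp (ha.add_odd hb)).trans (add_dvd_eightTorsionDisc a b)
  exact (Int.isUnit_or_isUnit_or_isUnit_of_card_primeFactors_le_two_s16 hD hcard h2D
    (dvd_eightTorsionDisc_left a b) (dvd_eightTorsionDisc_right a b) h2.1 h2.2 hab).resolve_left
    Int.prime_two.not_isUnit

theorem isUnit_of_eightTorsionDisc_of_even_right (hD : eightTorsionDisc a b ≠ 0)
    (hcard : (eightTorsionDisc a b).natAbs.primeFactors.card ≤ 2) (hab : IsCoprime a b)
    (hb : Even b) : IsUnit a := by
  obtain ⟨u, v, huv⟩ := hab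
  have hb0 : b ≠ 0 := by rintro rfl; exact hD (by simp [eightTorsionDisc])
  have h1 := Int.isUnit_or_isUnit_or_isUnit_of_card_primeFactors_le_two_s16 hD hcard
    (dvd_eightTorsionDisc_right a b) (dvd_eightTorsionDisc_left a b) (sub_dvd_eightTorsionDisc a b)
    ⟨v, u, by linear_combination huv⟩ ⟨u + v, u, by linear_combination huv⟩
    ⟨u + v, -v, by linear_combination huv⟩
  have h2 := Int.isUnit_or_isUnit_or_isUnit_of_card_primeFactors_le_two_s16 hD hcard
    (dvd_eightTorsionDisc_right a b) (dvd_eightTorsionDisc_left a b) (add_dvd_eightTorsionDisc a b)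
    ⟨v, u, by linear_combination huv⟩ ⟨v - u, u, by linear_combination huv⟩
    ⟨u - v, v, by linear_combination huv⟩
  obtain ⟨m, rfl⟩ := hb
  -- otherwise `a - b = ±1` and `a + b = ±1`, so `2b ∈ {0, ±2}`
  simp only [Int.isUnit_iff] at h1 h2 ⊢
  omega

theorem isUnit_or_isUnit_of_eightTorsionDisc (hD : eightTorsionDisc a b ≠ 0)
    (hcard : (eightTorsionDisc a b).natAbs.primeFactors.card ≤ 2) (hab : IsCoprime a b) :
    IsUnit a ∨ IsUnit b := by
  rcases Int.even_or_odd a with ha | ha <;> rcases Int.even_or_odd b with hb | hb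
  · exact absurd (hab.isUnit_of_dvd' (even_iff_two_dvd.mp ha) (even_iff_two_dvd.mp hb))
      Int.prime_two.not_isUnit
  · rw [eightTorsionDisc_comm] at hD hcard
    exact .inr (isUnit_of_eightTorsionDisc_of_even_right hD hcard hab.symm ha)
  · exact .inl (isUnit_of_eightTorsionDisc_of_even_right hD hcard hab hb)
  · exact isUnit_or_isUnit_of_eightTorsionDisc_of_odd hD hcard hab ha hb

theorem exists_eightTorsionDisc_eq_one_left (h : IsUnit a ∨ IsUnit b) :
    ∃ c, eightTorsionDisc a b = eightTorsionDisc 1 c := by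
  simp only [Int.isUnit_iff] at h
  rcases h with (rfl | rfl) | (rfl | rfl)
  · exact ⟨b, rfl⟩
  · exact ⟨-b, by rw [← eightTorsionDisc_neg_neg, neg_neg]⟩
  · exact ⟨a, eightTorsionDisc_comm a 1⟩
  · exact ⟨-a, by rw [eightTorsionDisc_comm, ← eightTorsionDisc_neg_neg, neg_neg]⟩

theorem eq_neg_three_of_eightTorsionDisc_one_left (hD : eightTorsionDisc 1 b ≠ 0)
    (hcard : (eightTorsionDisc 1 b).natAbs.primeFactors.card ≤ 2) : b = -3 := by
  have three_divisors {x y z : ℤ} (hx : x ∣ eightTorsionDisc 1 b) (hy : y ∣ eightTorsionDisc 1 b)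
      (hz : z ∣ eightTorsionDisc 1 b) (hxy : IsCoprime x y) (hxz : IsCoprime x z)
      (hyz : IsCoprime y z) : x = 1 ∨ x = -1 ∨ y = 1 ∨ y = -1 ∨ z = 1 ∨ z = -1 := by
    simpa only [Int.isUnit_iff, or_assoc] using
      Int.isUnit_or_isUnit_or_isUnit_of_card_primeFactors_le_two_s16 hD hcard hx hy hz hxy hxz hyz
  have hb : b ≠ 0 ∧ b ≠ 1 ∧ b ≠ -1 := by
    refine ⟨?_, ?_, ?_⟩ <;> rintro rfl <;> exact hD (by norm_num [eightTorsionDisc])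
  have hcases : b = 2 ∨ b = -2 ∨ b = 3 ∨ b = -3 := by
    rcases Int.even_or_odd' b with ⟨k, rfl | rfl⟩
    · have := three_divisors (dvd_eightTorsionDisc_right 1 _) (sub_dvd_eightTorsionDisc 1 _)
        (add_dvd_eightTorsionDisc 1 _) ⟨1, 1, by ring⟩ ⟨-1, 1, by ring⟩ ⟨-k, 1 - k, by ring⟩
      omega
    · have := three_divisors (y := k) (z := k + 1) (dvd_eightTorsionDisc_right 1 _)
        ((Dvd.intro_left (-2) (by ring)).trans (sub_dvd_eightTorsionDisc 1 _))
        ((Dvd.intro_left 2 (by ring)).trans (add_dvd_eightTorsionDisc 1 _))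
        ⟨1, -2, by ring⟩ ⟨-1, 2, by ring⟩ ⟨-1, 1, by ring⟩
      omega
  -- `eightTorsionDisc 1 b` is `2⁸ 3⁴ 17`, `-2⁸ 3² 7`, `2¹² 3⁸ 7` for `b = 2, -2, 3`
  rcases hcases with rfl | rfl | rfl | h
  · refine absurd (three_divisors (x := 2) (y := 3) (z := 17) ?_ ?_ ?_ ?_ ?_ ?_) ?_ <;>
      norm_num [eightTorsionDisc, Int.isCoprime_iff_gcd_eq_one]
  · refine absurd (three_divisors (x := 2) (y := 3) (z := 7) ?_ ?_ ?_ ?_ ?_ ?_) ?_ <;>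
      norm_num [eightTorsionDisc, Int.isCoprime_iff_gcd_eq_one]
  · refine absurd (three_divisors (x := 2) (y := 3) (z := 7) ?_ ?_ ?_ ?_ ?_ ?_) ?_ <;>
      norm_num [eightTorsionDisc, Int.isCoprime_iff_gcd_eq_one]
  · exact h

end

/-- Discriminants of elliptic curves with a rational 8-torsion point having
at most two distinct prime divisors. -/
theorem discriminant_eight_torsion (s t : ℤ) (hst : IsCoprime s t)
    (D : ℤ)
    (hD : D = s ^ 8 * t ^ 2 * (s - t) ^ 8 * (2 * s - t) ^ 4 *
      (8 * s ^ 2 - 8 * s * t + t ^ 2))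
    (hD0 : D ≠ 0) (hfac : D.natAbs.primeFactors.card ≤ 2) :
    D = -(2 ^ 11 * 3 ^ 8) := by
  obtain ⟨u, v, huv⟩ := hst
  have hcop : IsCoprime s (s - t) := ⟨u + v, -v, by linear_combination huv⟩
  obtain rfl : D = eightTorsionDisc s (s - t) := by rw [hD, eightTorsionDisc]; ring
  obtain ⟨c, hc⟩ := exists_eightTorsionDisc_eq_one_left
    (isUnit_or_isUnit_of_eightTorsionDisc hD0 hfac hcop)
  rw [hc] at hD0 hfac ⊢
  rw [eq_neg_three_of_eightTorsionDisc_one_left hD0 hfac, eightTorsionDisc]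
  norm_num
end

section
/- Let s and t be coprime integers and set D = s^9·t^9·(s−t)^9·(s^2 − st + t^2)^3·(s^3 − 6s^2t + 3st^2 + t^3). If D ≠ 0 and D has at most two distinct prime divisors, then D = −2^9·3^5. -/
/-!
The factors `s`, `t`, `s - t` and `E = s² - st + t²` of `D` are pairwise coprime, and
`2E = s² + t² + (s - t)² ≥ 3`, so `E` supplies a prime dividing none of the others. With at most
two primes in total, at most one of `s`, `t`, `s - t` is not `±1`; this leaves six pairs `(s, t)`,
each giving `D = -2⁹·3⁵`.
-/

theorem Nat.Coprime.card_primeFactors_mul {m n : ℕ} (h : m.Coprime n) :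
    (m * n).primeFactors.card = m.primeFactors.card + n.primeFactors.card := by
  rw [h.primeFactors_mul, Finset.card_union_of_disjoint h.disjoint_primeFactors]

theorem Int.three_le_card_primeFactors_of_isCoprime {D a b c : ℤ} (hD : D ≠ 0)
    (habc : a * b * c ∣ D) (hab : IsCoprime a b) (hac : IsCoprime a c) (hbc : IsCoprime b c)
    (ha : a.natAbs ≠ 1) (hb : b.natAbs ≠ 1) (hc : c.natAbs ≠ 1) :
    3 ≤ D.natAbs.primeFactors.card := by
  have habc0 : a * b * c ≠ 0 := ne_zero_of_dvd_ne_zero hD habc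
  simp only [mul_ne_zero_iff] at habc0
  have one_le {x : ℤ} (hx0 : x ≠ 0) (hx1 : x.natAbs ≠ 1) : 1 ≤ x.natAbs.primeFactors.card :=
    Finset.card_pos.mpr <| Nat.nonempty_primeFactors.mpr <| by
      have := Int.natAbs_ne_zero.mpr hx0; omega
  rw [Int.isCoprime_iff_gcd_eq_one] at hab hac hbc
  have hsub : (a * b * c).natAbs.primeFactors ⊆ D.natAbs.primeFactors :=
    Nat.primeFactors_mono (Int.natAbs_dvd_natAbs.mpr habc) (Int.natAbs_ne_zero.mpr hD)
  have hcard := Finset.card_le_card hsub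
  rw [Int.natAbs_mul, Int.natAbs_mul, (Nat.Coprime.mul_left hac hbc).card_primeFactors_mul,
    Nat.Coprime.card_primeFactors_mul hab] at hcard
  have := one_le habc0.1.1 ha
  have := one_le habc0.1.2 hb
  have := one_le habc0.2 hc
  omega

section IsCoprime

variable {R : Type*} [CommRing R] {a b : R}

theorem IsCoprime.self_sub_right (h : IsCoprime a b) : IsCoprime a (a - b) := by
  simpa using (IsCoprime.mul_sub_left_right_iff (z := 1)).mpr h

theorem IsCoprime.sub_self_right (h : IsCoprime a b) : IsCoprime a (b - a) := by
  simpa using (IsCoprime.sub_mul_left_right_iff (z := 1)).mpr h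

theorem IsCoprime.left_sq_sub_mul_add_sq (h : IsCoprime a b) :
    IsCoprime a (a ^ 2 - a * b + b ^ 2) := by
  rw [show a ^ 2 - a * b + b ^ 2 = b ^ 2 + a * (a - b) by ring]
  exact IsCoprime.add_mul_left_right_iff.mpr h.pow_right

theorem IsCoprime.sq_sub_mul_add_sq (h : IsCoprime a b) :
    IsCoprime a (a ^ 2 - a * b + b ^ 2) ∧ IsCoprime b (a ^ 2 - a * b + b ^ 2) ∧
      IsCoprime (a - b) (a ^ 2 - a * b + b ^ 2) := by
  refine ⟨h.left_sq_sub_mul_add_sq, ?_, ?_⟩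
  · simpa only [show b ^ 2 - b * a + a ^ 2 = a ^ 2 - a * b + b ^ 2 by ring] using
      h.symm.left_sq_sub_mul_add_sq
  · simpa only [show (a - b) ^ 2 - (a - b) * -b + (-b) ^ 2 = a ^ 2 - a * b + b ^ 2 by ring] using
      h.symm.sub_self_right.symm.neg_right.left_sq_sub_mul_add_sq

end IsCoprime

theorem two_le_sq_sub_mul_add_sq {a b : ℤ} (ha : a ≠ 0) (hb : b ≠ 0) (hab : a ≠ b) :
    2 ≤ a ^ 2 - a * b + b ^ 2 := by
  nlinarith [sq_pos_of_ne_zero ha, sq_pos_of_ne_zero hb, sq_pos_of_ne_zero (sub_ne_zero.mpr hab)]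

/-- Discriminants of elliptic curves with a rational 9-torsion point having
at most two distinct prime divisors. -/
theorem discriminant_nine_torsion (s t : ℤ) (hst : IsCoprime s t)
    (D : ℤ)
    (hD : D = s ^ 9 * t ^ 9 * (s - t) ^ 9 * (s ^ 2 - s * t + t ^ 2) ^ 3 *
      (s ^ 3 - 6 * s ^ 2 * t + 3 * s * t ^ 2 + t ^ 3))
    (hD0 : D ≠ 0) (hfac : D.natAbs.primeFactors.card ≤ 2) :
    D = -(2 ^ 9 * 3 ^ 5) := by
  set E := s ^ 2 - s * t + t ^ 2
  have hs : s ≠ 0 := by rintro rfl; simp [hD] at hD0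
  have ht : t ≠ 0 := by rintro rfl; simp [hD] at hD0
  have hst' : s ≠ t := by rintro rfl; simp [hD] at hD0
  have hE1 : E.natAbs ≠ 1 := by have := two_le_sq_sub_mul_add_sq hs ht hst'; omega
  have hdvd : s * t * (s - t) * E ∣ D :=
    ⟨s ^ 8 * t ^ 8 * (s - t) ^ 8 * E ^ 2 * (s ^ 3 - 6 * s ^ 2 * t + 3 * s * t ^ 2 + t ^ 3),
      by rw [hD]; ring⟩
  have one_is_unit {a b : ℤ} (habE : a * b * E ∣ s * t * (s - t) * E) (hab : IsCoprime a b)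
      (haE : IsCoprime a E) (hbE : IsCoprime b E) : a.natAbs = 1 ∨ b.natAbs = 1 := by
    by_contra! h
    have := Int.three_le_card_primeFactors_of_isCoprime hD0 (habE.trans hdvd) hab haE hbE
      h.1 h.2 hE1
    omega
  obtain ⟨hsE, htE, hstE⟩ := hst.sq_sub_mul_add_sq
  have h₁ := one_is_unit ⟨s - t, by ring⟩ hst hsE htE
  have h₂ := one_is_unit ⟨t, by ring⟩ hst.self_sub_right hsE hstE
  have h₃ := one_is_unit ⟨s, by ring⟩ hst.symm.sub_self_right htE hstE
  obtain ⟨rfl, rfl⟩ | ⟨rfl, rfl⟩ | ⟨rfl, rfl⟩ | ⟨rfl, rfl⟩ | ⟨rfl, rfl⟩ | ⟨rfl, rfl⟩ :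
      (s = 1 ∧ t = -1) ∨ (s = -1 ∧ t = 1) ∨ (s = 1 ∧ t = 2) ∨ (s = -1 ∧ t = -2) ∨
      (s = 2 ∧ t = 1) ∨ (s = -2 ∧ t = -1) := by omega
  all_goals norm_num [hD, E]
end

section
/- Let s and t be coprime integers and set D = s^10·t^5·(s−t)^10·(2s−t)^5·(4s^2 − 2st − t^2)·(s^2 − 3st + t^2)^2. Then either D = 0 or D has at least three distinct prime divisors. -/
/-!
Write `a = s(s - t)`, `b = t(2s - t)` and `c = (4s² - 2st - t²)(s² - 3st + t²)`, so that
`D = a¹⁰ b⁵ c (s² - 3st + t²)`. Modulo `a` we have `b² ≡ t⁴` and `c² ≡ t⁸`, and `t` is prime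
to `a`, so `a` is prime to `b` and to `c`. Modulo `b` we have `c² ≡ 16 s⁸`, and `s` is prime
to `b`, so `gcd(b, c) ∣ 16`. When `D ≠ 0`, neither `a` nor `b` is a unit, and `c` has an odd
prime factor: `s² - 3st + t²` is odd and `4s² - 2st - t²` is odd or four times an odd number,
so otherwise they would be `±1` and `±1` or `±4`, while their sum is `5a` with `a ∉ {0, ±1}`.
A prime factor of `a`, one of `b` and an odd one of `c` are three distinct prime factors of `D`.
-/

theorem IsCoprime.of_dvd_sub {R : Type*} [CommRing R] {a x y : R} (h : IsCoprime a x)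
    (hxy : a ∣ y - x) : IsCoprime a y := by
  obtain ⟨k, hk⟩ := hxy
  rw [sub_eq_iff_eq_add'.mp hk]
  exact h.add_mul_left_right k

theorem Int.odd_or_odd_of_isCoprime {s t : ℤ} (h : IsCoprime s t) : Odd s ∨ Odd t := by
  by_contra! h'
  simp only [Int.not_odd_iff_even, even_iff_two_dvd] at h'
  exact absurd (h.isUnit_of_dvd' h'.1 h'.2) (by decide)

theorem Int.isUnit_of_odd_of_forall_prime_dvd {x : ℤ} (hx : Odd x)
    (h : ∀ p : ℕ, p.Prime → p ∣ x.natAbs → p = 2) : IsUnit x := by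
  rw [Int.isUnit_iff_natAbs_eq]
  by_contra hx1
  obtain ⟨p, hp, hpx⟩ := Nat.exists_prime_and_dvd hx1
  have h2 : (2 : ℤ) ∣ x := by exact_mod_cast Int.natCast_dvd.mpr (h p hp hpx ▸ hpx)
  exact Int.not_even_iff_odd.mpr hx (even_iff_two_dvd.mpr h2)

theorem Nat.Prime.ne_of_dvd_natAbs_of_isCoprime {x y : ℤ} {p q : ℕ} (hp : p.Prime)
    (hxy : IsCoprime x y) (hpx : p ∣ x.natAbs) (hqy : q ∣ y.natAbs) : p ≠ q := by
  rintro rfl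
  have hgcd : Nat.gcd x.natAbs y.natAbs = 1 := Int.isCoprime_iff_gcd_eq_one.mp hxy
  exact hp.ne_one (Nat.dvd_one.mp (hgcd ▸ Nat.dvd_gcd hpx hqy))

theorem Nat.three_le_card_primeFactors {n p q r : ℕ} (hn : n ≠ 0) (hp : p.Prime) (hq : q.Prime)
    (hr : r.Prime) (hpq : p ≠ q) (hpr : p ≠ r) (hqr : q ≠ r) (hpn : p ∣ n) (hqn : q ∣ n)
    (hrn : r ∣ n) : 3 ≤ n.primeFactors.card := by
  have hsub : {p, q, r} ⊆ n.primeFactors := by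
    simp [Finset.insert_subset_iff, Nat.mem_primeFactors, *]
  exact (Finset.card_eq_three.mpr ⟨p, q, r, hpq, hpr, hqr, rfl⟩).symm.le.trans
    (Finset.card_le_card hsub)

section CommRing

variable {R : Type*} [CommRing R] {s t : R}

theorem IsCoprime.isCoprime_mul_sub_right (hst : IsCoprime s t) : IsCoprime t (s * (s - t)) :=
  (hst.symm.pow_right (n := 2)).of_dvd_sub ⟨-s, by ring⟩

theorem IsCoprime.isCoprime_mul_sub_mul_two_mul_sub (hst : IsCoprime s t) :
    IsCoprime (s * (s - t)) (t * (2 * s - t)) :=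
  (IsCoprime.pow_right_iff two_pos).mp <|
    (hst.isCoprime_mul_sub_right.symm.pow_right (n := 4)).of_dvd_sub ⟨4 * t ^ 2, by ring⟩

theorem IsCoprime.isCoprime_mul_sub_quadratics (hst : IsCoprime s t) :
    IsCoprime (s * (s - t)) ((4 * s ^ 2 - 2 * s * t - t ^ 2) * (s ^ 2 - 3 * s * t + t ^ 2)) :=
  (IsCoprime.pow_right_iff two_pos).mp <|
    (hst.isCoprime_mul_sub_right.symm.pow_right (n := 8)).of_dvd_sub
      ⟨4 * (2 * s + t) * (2 * s - t) * (s ^ 2 - 3 * s * t + t ^ 2) ^ 2 +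
        t ^ 4 * (s - 3 * t) * (s - 2 * t), by ring⟩

theorem IsCoprime.dvd_sixteen_of_dvd_of_dvd (hst : IsCoprime s t) {d : R}
    (hdb : d ∣ t * (2 * s - t))
    (hdc : d ∣ (4 * s ^ 2 - 2 * s * t - t ^ 2) * (s ^ 2 - 3 * s * t + t ^ 2)) : d ∣ 16 := by
  have hsb : IsCoprime s (t * (2 * s - t)) :=
    (hst.pow_right (n := 2)).neg_right.of_dvd_sub ⟨2 * t, by ring⟩
  have hb : t * (2 * s - t) ∣
      ((4 * s ^ 2 - 2 * s * t - t ^ 2) * (s ^ 2 - 3 * s * t + t ^ 2)) ^ 2 - 16 * s ^ 8 :=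
    ⟨-(2 * s + t) * (4 * s + t) * (s ^ 2 - 3 * s * t + t ^ 2) ^ 2 +
      16 * s ^ 4 * (t - 3 * s) * (s - t), by ring⟩
  have hd : d ∣ 16 * s ^ 8 := by simpa using (dvd_pow hdc two_ne_zero).sub (hdb.trans hb)
  exact (hsb.symm.of_isCoprime_of_dvd_left hdb).pow_right.dvd_of_dvd_mul_right hd

end CommRing

section Int

variable {s t : ℤ}

theorem IsCoprime.odd_sq_sub_three_mul_mul_add_sq (hst : IsCoprime s t) :
    Odd (s ^ 2 - 3 * s * t + t ^ 2) := by
  have hodd := Int.odd_or_odd_of_isCoprime hst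
  rcases Int.even_or_odd s with hs | hs <;> rcases Int.even_or_odd t with ht | ht <;>
    simp_all [← Int.not_even_iff_odd, parity_simps, show ¬Even (3 : ℤ) by decide]

theorem IsCoprime.eq_two_of_prime_dvd_of_dvd (hst : IsCoprime s t) {r : ℕ} (hr : r.Prime)
    (hrb : r ∣ (t * (2 * s - t)).natAbs)
    (hrc : r ∣ ((4 * s ^ 2 - 2 * s * t - t ^ 2) * (s ^ 2 - 3 * s * t + t ^ 2)).natAbs) :
    r = 2 := by
  have hr16 : (r : ℤ) ∣ 2 ^ 4 :=
    hst.dvd_sixteen_of_dvd_of_dvd (Int.natCast_dvd.mpr hrb) (Int.natCast_dvd.mpr hrc)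
  exact (Nat.prime_dvd_prime_iff_eq hr Nat.prime_two).mp
    (hr.dvd_of_dvd_pow (Int.natCast_dvd_natCast.mp hr16))

theorem IsCoprime.exists_odd_prime_dvd_quadratics (hst : IsCoprime s t)
    (ha0 : s * (s - t) ≠ 0) (ha : ¬IsUnit (s * (s - t))) :
    ∃ r : ℕ, r.Prime ∧ r ≠ 2 ∧
      r ∣ ((4 * s ^ 2 - 2 * s * t - t ^ 2) * (s ^ 2 - 3 * s * t + t ^ 2)).natAbs := by
  by_contra! h
  have hunit : ∀ x : ℤ, Odd x →
      x ∣ (4 * s ^ 2 - 2 * s * t - t ^ 2) * (s ^ 2 - 3 * s * t + t ^ 2) → x = 1 ∨ x = -1 :=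
    fun x hx hxc => Int.isUnit_iff.mp <| Int.isUnit_of_odd_of_forall_prime_dvd hx fun p hp hpx =>
      by_contra (h p hp · (hpx.trans (Int.natAbs_dvd_natAbs.mpr hxc)))
  have h6 := hunit _ hst.odd_sq_sub_three_mul_mul_add_sq (dvd_mul_left _ _)
  rw [Int.isUnit_iff] at ha
  rcases Int.even_or_odd t with ⟨u, rfl⟩ | ht
  · have hs : Odd s :=
      (Int.odd_or_odd_of_isCoprime hst).resolve_right (Int.not_odd_iff_even.mpr ⟨u, rfl⟩)
    have h5 := hunit (s ^ 2 - s * u - u ^ 2)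
      (by rcases Int.even_or_odd u with hu | hu <;>
            simp_all [← Int.not_even_iff_odd, parity_simps])
      ⟨4 * (s ^ 2 - 3 * s * (u + u) + (u + u) ^ 2), by ring⟩
    have hsum : 5 * (s * (s - (u + u))) =
        4 * (s ^ 2 - s * u - u ^ 2) + (s ^ 2 - 3 * s * (u + u) + (u + u) ^ 2) := by ring
    omega
  · have h5 := hunit (4 * s ^ 2 - 2 * s * t - t ^ 2)
      (by simp_all [← Int.not_even_iff_odd, parity_simps, show Even (4 : ℤ) by decide])
      (dvd_mul_right _ _)
    have hsum : 5 * (s * (s - t)) =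
        (4 * s ^ 2 - 2 * s * t - t ^ 2) + (s ^ 2 - 3 * s * t + t ^ 2) := by ring
    omega

end Int

/-- The discriminant of an elliptic curve with a rational 10-torsion point is
either zero or has at least three distinct prime divisors. -/
theorem discriminant_ten_torsion (s t : ℤ) (hst : IsCoprime s t)
    (D : ℤ)
    (hD : D = s ^ 10 * t ^ 5 * (s - t) ^ 10 * (2 * s - t) ^ 5 *
      (4 * s ^ 2 - 2 * s * t - t ^ 2) * (s ^ 2 - 3 * s * t + t ^ 2) ^ 2) :
    D = 0 ∨ 3 ≤ D.natAbs.primeFactors.card := by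
  refine or_iff_not_imp_left.mpr fun hD0 => ?_
  obtain ⟨hs, ht, hs_t, h2s_t, -, -⟩ :
      s ≠ 0 ∧ t ≠ 0 ∧ s - t ≠ 0 ∧ 2 * s - t ≠ 0 ∧ _ ∧ _ := by
    simpa [hD, and_assoc] using hD0
  have hD' : D = (s * (s - t)) ^ 10 * (t * (2 * s - t)) ^ 5 *
      ((4 * s ^ 2 - 2 * s * t - t ^ 2) * (s ^ 2 - 3 * s * t + t ^ 2)) *
      (s ^ 2 - 3 * s * t + t ^ 2) := by
    rw [hD]; ring
  have ha : ¬IsUnit (s * (s - t)) := by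
    rw [IsUnit.mul_iff, Int.isUnit_iff, Int.isUnit_iff]; omega
  have hb : ¬IsUnit (t * (2 * s - t)) := by
    rw [IsUnit.mul_iff, Int.isUnit_iff, Int.isUnit_iff]; omega
  obtain ⟨p, hp, hpa⟩ := Nat.exists_prime_and_dvd (mt Int.isUnit_iff_natAbs_eq.mpr ha)
  obtain ⟨q, hq, hqb⟩ := Nat.exists_prime_and_dvd (mt Int.isUnit_iff_natAbs_eq.mpr hb)
  obtain ⟨r, hr, hr2, hrc⟩ := hst.exists_odd_prime_dvd_quadratics (mul_ne_zero hs hs_t) ha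
  have hdvd : ∀ {x : ℤ} {ℓ : ℕ}, x ∣ D → ℓ ∣ x.natAbs → ℓ ∣ D.natAbs :=
    fun hx hℓ => hℓ.trans (Int.natAbs_dvd_natAbs.mpr hx)
  refine Nat.three_le_card_primeFactors (Int.natAbs_ne_zero.mpr hD0) hp hq hr
    (hp.ne_of_dvd_natAbs_of_isCoprime hst.isCoprime_mul_sub_mul_two_mul_sub hpa hqb)
    (hp.ne_of_dvd_natAbs_of_isCoprime hst.isCoprime_mul_sub_quadratics hpa hrc)
    (fun hqr => hr2 (hst.eq_two_of_prime_dvd_of_dvd hr (hqr ▸ hqb) hrc))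
    (hdvd (hD' ▸ (((dvd_pow_self _ (by norm_num)).mul_right _).mul_right _).mul_right _) hpa)
    (hdvd (hD' ▸ (((dvd_pow_self _ (by norm_num)).mul_left _).mul_right _).mul_right _) hqb)
    (hdvd (hD' ▸ (dvd_mul_left _ _).mul_right _) hrc)
end

section
/- Let s and t be coprime integers and set D = s^12·t^2·(s−t)^12·(2s−t)^6·(3s^2 − 3st + t^2)^4·(2s^2 − 2st + t^2)^3·(6s^2 − 6st + t^2). Then either D = 0 or D has at least three distinct prime divisors. -/
/-!
Write the discriminant as `s t (s - t) (2s - t) · (s² + (s - t)²) · R`, noting that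
`2s² - 2st + t² = s² + (s - t)²`. The first factor is divisible by 6 for every `s, t`,
so `2` and `3` divide `D`. The second is a sum of two coprime squares, hence divisible by
neither `3` nor `4`; as it exceeds `2` once `D ≠ 0`, it has a prime factor `p ≥ 5`.
-/

theorem Nat.exists_prime_dvd_ne_two_ne_three {n : ℕ} (hn : 2 < n) (h3 : ¬ 3 ∣ n)
    (h4 : ¬ 4 ∣ n) : ∃ p, p.Prime ∧ p ∣ n ∧ p ≠ 2 ∧ p ≠ 3 := by
  by_contra! h
  obtain ⟨k, rfl⟩ : ∃ k, n = 2 ^ k :=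
    ⟨_, Nat.eq_prime_pow_of_unique_prime_dvd (by omega) fun hp hpn => by
      by_contra h2
      exact h3 (h _ hp hpn h2 ▸ hpn)⟩
  rcases le_or_gt 2 k with hk | hk
  · exact h4 (pow_dvd_pow 2 hk)
  · interval_cases k <;> omega

theorem Int.not_three_dvd_sq_add_sq {a b : ℤ} (hab : IsCoprime a b) :
    ¬ 3 ∣ a ^ 2 + b ^ 2 := by
  intro h
  have key : ∀ x y : ZMod 3, x ^ 2 + y ^ 2 = 0 → x = 0 ∧ y = 0 := by decide
  have h' : ((a ^ 2 + b ^ 2 : ℤ) : ZMod 3) = 0 := (ZMod.intCast_zmod_eq_zero_iff_dvd _ 3).mpr h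
  push_cast at h'
  obtain ⟨ha, hb⟩ := key _ _ h'
  have := hab.isUnit_of_dvd' ((ZMod.intCast_zmod_eq_zero_iff_dvd a 3).mp ha)
    ((ZMod.intCast_zmod_eq_zero_iff_dvd b 3).mp hb)
  norm_num [Int.isUnit_iff] at this

theorem Int.not_four_dvd_sq_add_sq {a b : ℤ} (hab : IsCoprime a b) :
    ¬ 4 ∣ a ^ 2 + b ^ 2 := by
  intro h
  have sq_mod (x : ℤ) : x ^ 2 % 4 = 1 ∨ (x ^ 2 % 4 = 0 ∧ 2 ∣ x) := by
    rcases Int.even_or_odd x with ⟨k, rfl⟩ | hx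
    · right; constructor
      · rw [show (k + k) ^ 2 = 4 * k ^ 2 by ring]; omega
      · omega
    · exact Or.inl (Int.sq_mod_four_eq_one_of_odd hx)
  obtain ⟨ha, hb⟩ : 2 ∣ a ∧ 2 ∣ b := by
    rcases sq_mod a with h1 | h1 <;> rcases sq_mod b with h2 | h2 <;> omega
  have := hab.isUnit_of_dvd' ha hb
  norm_num [Int.isUnit_iff] at this

theorem Int.two_lt_sq_add_sq {a b : ℤ} (ha : a ≠ 0) (hb : b ≠ 0) (hab : a ≠ b)
    (hab' : a ≠ -b) : 2 < a ^ 2 + b ^ 2 := by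
  have : a ^ 2 ≠ b ^ 2 := fun h => (sq_eq_sq_iff_eq_or_eq_neg.mp h).elim hab hab'
  have : 0 < a ^ 2 := by positivity
  have : 0 < b ^ 2 := by positivity
  omega

theorem Int.exists_prime_dvd_sq_add_sq {a b : ℤ} (hab : IsCoprime a b)
    (h : 2 < a ^ 2 + b ^ 2) :
    ∃ p : ℕ, p.Prime ∧ (p : ℤ) ∣ a ^ 2 + b ^ 2 ∧ p ≠ 2 ∧ p ≠ 3 := by
  have h3 : ¬ 3 ∣ (a ^ 2 + b ^ 2).natAbs :=
    fun h => Int.not_three_dvd_sq_add_sq hab (Int.natCast_dvd.mpr h)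
  have h4 : ¬ 4 ∣ (a ^ 2 + b ^ 2).natAbs :=
    fun h => Int.not_four_dvd_sq_add_sq hab (Int.natCast_dvd.mpr h)
  obtain ⟨p, hp, hpn, hp2, hp3⟩ := Nat.exists_prime_dvd_ne_two_ne_three (by omega) h3 h4
  exact ⟨p, hp, Int.natCast_dvd.mpr hpn, hp2, hp3⟩

theorem Int.six_dvd_mul_mul_sub_mul_sub (s t : ℤ) : 6 ∣ s * t * (s - t) * (2 * s - t) := by
  have key : ∀ x y : ZMod 6, x * y * (x - y) * (2 * x - y) = 0 := by decide
  apply (ZMod.intCast_zmod_eq_zero_iff_dvd _ 6).mp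
  push_cast
  exact key _ _

theorem Nat.three_le_card_primeFactors_s19 {n p : ℕ} (hn : n ≠ 0) (h2 : 2 ∣ n) (h3 : 3 ∣ n)
    (hp : p.Prime) (hpn : p ∣ n) (hp2 : p ≠ 2) (hp3 : p ≠ 3) : 3 ≤ n.primeFactors.card := by
  have hsub : {2, 3, p} ⊆ n.primeFactors := by
    simp only [Finset.insert_subset_iff, Finset.singleton_subset_iff, Nat.mem_primeFactors]
    exact ⟨⟨Nat.prime_two, h2, hn⟩, ⟨Nat.prime_three, h3, hn⟩, ⟨hp, hpn, hn⟩⟩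
  calc 3 = ({2, 3, p} : Finset ℕ).card :=
        (Finset.card_eq_three.mpr ⟨2, 3, p, by decide, hp2.symm, hp3.symm, rfl⟩).symm
    _ ≤ n.primeFactors.card := Finset.card_le_card hsub

/-- The discriminant of an elliptic curve with a rational 12-torsion point is
either zero or has at least three distinct prime divisors. -/
theorem discriminant_twelve_torsion (s t : ℤ) (hst : IsCoprime s t)
    (D : ℤ)
    (hD : D = s ^ 12 * t ^ 2 * (s - t) ^ 12 * (2 * s - t) ^ 6 *
      (3 * s ^ 2 - 3 * s * t + t ^ 2) ^ 4 * (2 * s ^ 2 - 2 * s * t + t ^ 2) ^ 3 *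
      (6 * s ^ 2 - 6 * s * t + t ^ 2)) :
    D = 0 ∨ 3 ≤ D.natAbs.primeFactors.card := by
  rcases eq_or_ne D 0 with hD0 | hD0
  · exact Or.inl hD0
  right
  obtain ⟨R, hR⟩ : ∃ R, D = s * t * (s - t) * (2 * s - t) * (s ^ 2 + (s - t) ^ 2) * R :=
    ⟨s ^ 11 * t * (s - t) ^ 11 * (2 * s - t) ^ 5 * (3 * s ^ 2 - 3 * s * t + t ^ 2) ^ 4 *
      (2 * s ^ 2 - 2 * s * t + t ^ 2) ^ 2 * (6 * s ^ 2 - 6 * s * t + t ^ 2), by rw [hD]; ring⟩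
  have hne := hD0
  simp only [hR, ne_eq, mul_eq_zero, not_or] at hne
  obtain ⟨⟨⟨⟨⟨hs, ht⟩, hst'⟩, h2st⟩, -⟩, -⟩ := hne
  have hB : 2 < s ^ 2 + (s - t) ^ 2 :=
    Int.two_lt_sq_add_sq hs hst' (by omega) (by omega)
  have hcop : IsCoprime s (s - t) := by
    simpa only [mul_one] using (IsCoprime.mul_sub_left_right_iff (z := 1)).mpr hst
  obtain ⟨p, hp, hpB, hp2, hp3⟩ := Int.exists_prime_dvd_sq_add_sq hcop hB
  have h6 : (6 : ℤ) ∣ D :=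
    hR ▸ ((Int.six_dvd_mul_mul_sub_mul_sub s t).mul_right _).mul_right R
  have hpD : (p : ℤ) ∣ D := hR ▸ (hpB.mul_left _).mul_right R
  exact Nat.three_le_card_primeFactors_s19 (Int.natAbs_ne_zero.mpr hD0)
    (Int.natCast_dvd.mp (dvd_trans (by norm_num) h6))
    (Int.natCast_dvd.mp (dvd_trans (by norm_num) h6))
    hp (Int.natCast_dvd.mp hpD) hp2 hp3
end
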